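/- arXiv:1604.08372 — 8 statements merged into one kernel-verified Lean document; each statement's English description precedes it below -/
import Mathlib

section
/- Let d ≥ 3, let v : (0,∞) → ℝ be continuous, and let r_d > 0 be such that v(r) + (d-2)²/(4r²) > 0 for all r ∈ (0, r_d). Set V(x) = v(‖x‖). Let λ < 0 and let u : ℝ^d → ℝ be a nonzero twice continuously differentiable function such that u and ‖∇u‖ are square integrable on ℝ^d and -Δu(x) + V(x)·u(x) = λ·u(x) for all x ≠ 0. Then no connected component of {x ∈ ℝ^d : u(x) ≠ 0} is contained in the open ball B(0, r_d). -/
/-!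
Take the weight `w x = (‖x‖ ^ 2) ^ γ` with `γ = (d - 2) / 4`, the ground state of Hardy's
inequality. If `u > 0` on a nodal domain `Ω ⊆ B(0, r_d)`, then `u * w` vanishes on `∂Ω` and at
the origin, so it attains a positive maximum at some `x₀ ∈ Ω \ {0}`. Along each coordinate line
through `x₀` the second derivative of `u * w` is nonpositive; using that the first derivative
vanishes and summing over the coordinates gives `Δu x₀ + (d - 2)² / (4 ‖x₀‖²) * u x₀ ≤ 0`.
The eigenvalue equation turns the left side into `(v ‖x₀‖ + (d - 2)² / (4 ‖x₀‖²) - λ) * u x₀`,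
which is positive.
-/

open MeasureTheory Filter Topology

/-- The Euclidean Laplacian `Δu = Σᵢ ∂²u/∂xᵢ²`. -/
noncomputable def EuclLaplacian {d : ℕ} (u : EuclideanSpace ℝ (Fin d) → ℝ)
    (x : EuclideanSpace ℝ (Fin d)) : ℝ :=
  ∑ i : Fin d, fderiv ℝ (fun y => fderiv ℝ u y (EuclideanSpace.single i 1)) x
      (EuclideanSpace.single i 1)

theorem IsLocalMax.deriv_deriv_nonpos {f : ℝ → ℝ} {x₀ : ℝ} (hmax : IsLocalMax f x₀)
    (hc : ContinuousAt f x₀) : deriv (deriv f) x₀ ≤ 0 := by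
  by_contra! hpos
  -- Otherwise `x₀` is also a local minimum, so `f` is constant near `x₀`.
  have hmin := isLocalMin_of_deriv_deriv_pos hpos hmax.deriv_eq_zero hc
  have hconst : f =ᶠ[𝓝 x₀] fun _ => f x₀ :=
    (hmax.and hmin).mono fun _ hx => le_antisymm hx.1 hx.2
  simp [hconst.deriv.deriv_eq] at hpos

theorem IsLocalMax.second_deriv_mul_nonpos {f ψ f' ψ' : ℝ → ℝ} {f'' ψ'' x₀ : ℝ}
    (hf : ∀ᶠ x in 𝓝 x₀, HasDerivAt f (f' x) x) (hf' : HasDerivAt f' f'' x₀)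
    (hψ : ∀ᶠ x in 𝓝 x₀, HasDerivAt ψ (ψ' x) x) (hψ' : HasDerivAt ψ' ψ'' x₀)
    (hψ₀ : 0 < ψ x₀) (hmax : IsLocalMax (fun x => f x * ψ x) x₀) :
    f'' + f x₀ * (ψ'' / ψ x₀ - 2 * (ψ' x₀ / ψ x₀) ^ 2) ≤ 0 := by
  have hderiv : deriv (fun x => f x * ψ x) =ᶠ[𝓝 x₀] fun x => f' x * ψ x + f x * ψ' x :=
    (hf.and hψ).mono fun x hx => (hx.1.mul hx.2).deriv
  have hcrit : f' x₀ * ψ x₀ = -(f x₀ * ψ' x₀) := by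
    rw [← add_eq_zero_iff_eq_neg, ← hderiv.eq_of_nhds, hmax.deriv_eq_zero]
  have hsecond : f'' * ψ x₀ + 2 * f' x₀ * ψ' x₀ + f x₀ * ψ'' ≤ 0 := by
    have h := hmax.deriv_deriv_nonpos
      (hf.self_of_nhds.continuousAt.mul hψ.self_of_nhds.continuousAt)
    rw [hderiv.deriv_eq, ((hf'.fun_mul hψ.self_of_nhds).fun_add
      (hf.self_of_nhds.fun_mul hψ')).deriv] at h
    linarith
  have hscaled : ψ x₀ ^ 2 * (f'' + f x₀ * (ψ'' / ψ x₀ - 2 * (ψ' x₀ / ψ x₀) ^ 2)) =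
      ψ x₀ * (f'' * ψ x₀ + 2 * f' x₀ * ψ' x₀ + f x₀ * ψ'') := by
    field_simp
    linear_combination (-2 * ψ' x₀) * hcrit
  refine nonpos_of_mul_nonpos_right ?_ (pow_pos hψ₀ 2)
  rw [hscaled]
  exact mul_nonpos_of_nonneg_of_nonpos hψ₀.le hsecond

theorem IsLocalMax.second_deriv_le_of_mul_rpow_quadratic {f f' : ℝ → ℝ} {f'' a b γ : ℝ}
    (ha : 0 < a) (hf : ∀ᶠ t in 𝓝 0, HasDerivAt f (f' t) t) (hf' : HasDerivAt f' f'' 0)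
    (hmax : IsLocalMax (fun t => f t * (a + 2 * b * t + t ^ 2) ^ γ) 0) :
    f'' + f 0 * (2 * γ / a - 4 * γ * (γ + 1) * b ^ 2 / a ^ 2) ≤ 0 := by
  set q : ℝ → ℝ := fun t => a + 2 * b * t + t ^ 2
  have hq : ∀ t, HasDerivAt q (2 * b + 2 * t) t := fun t =>
    ((((hasDerivAt_id' t).const_mul (2 * b)).const_add a).fun_add
      (hasDerivAt_pow 2 t)).congr_deriv (by simp)
  have hq₀ : q 0 ≠ 0 := by simpa [q] using ha.ne'
  have hψ : ∀ᶠ t in 𝓝 0,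
      HasDerivAt (fun t => q t ^ γ) ((2 * b + 2 * t) * γ * q t ^ (γ - 1)) t :=
    ((hq 0).continuousAt.eventually_ne hq₀).mono fun t ht => (hq t).rpow_const (Or.inl ht)
  have hψ' : HasDerivAt (fun t => (2 * b + 2 * t) * γ * q t ^ (γ - 1))
      (2 * γ * q 0 ^ (γ - 1) + 2 * b * γ * (2 * b * (γ - 1) * q 0 ^ (γ - 1 - 1))) 0 :=
    ((((hasDerivAt_id' (0 : ℝ)).const_mul 2).const_add (2 * b)).mul_const γ).fun_mul
      ((hq 0).rpow_const (p := γ - 1) (Or.inl hq₀)) |>.congr_deriv (by simp)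
  have h := hmax.second_deriv_mul_nonpos hf hf' hψ hψ'
    (by simpa [q] using Real.rpow_pos_of_pos ha γ)
  convert h using 3
  simp only [q, mul_zero, add_zero, zero_pow two_ne_zero]
  rw [Real.rpow_sub_one ha.ne', Real.rpow_sub_one ha.ne', Real.rpow_sub_one ha.ne']
  field_simp
  ring

theorem HasFDerivAt.hasDerivAt_comp_add_smul {E F : Type*} [NormedAddCommGroup E]
    [NormedSpace ℝ E] [NormedAddCommGroup F] [NormedSpace ℝ F] {f : E → F} {f' : E →L[ℝ] F}
    {x v : E} {t : ℝ} (hf : HasFDerivAt f f' (x + t • v)) :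
    HasDerivAt (fun s : ℝ => f (x + s • v)) (f' v) t :=
  hf.comp_hasDerivAt t ((((hasDerivAt_id' t).smul_const v).const_add x).congr_deriv (one_smul ℝ v))

theorem EuclideanSpace.sq_norm_add_smul_single {ι : Type*} [Fintype ι] [DecidableEq ι]
    (x : EuclideanSpace ℝ ι) (i : ι) (t : ℝ) :
    ‖x + t • EuclideanSpace.single i 1‖ ^ 2 = ‖x‖ ^ 2 + 2 * x i * t + t ^ 2 := by
  rw [norm_add_sq_real, inner_smul_right, EuclideanSpace.inner_single_right, norm_smul,
    PiLp.norm_single, norm_one, mul_one, Real.norm_eq_abs, sq_abs, one_mul, conj_trivial]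
  ring

theorem IsLocalMax.euclLaplacian_add_le_of_mul_rpow {d : ℕ} {U : EuclideanSpace ℝ (Fin d) → ℝ}
    (hU : ContDiff ℝ 2 U) {x₀ : EuclideanSpace ℝ (Fin d)} (hx₀ : x₀ ≠ 0) {γ : ℝ}
    (hmax : IsLocalMax (fun y => U y * (‖y‖ ^ 2) ^ γ) x₀) :
    EuclLaplacian U x₀ + 2 * γ * (d - 2 - 2 * γ) / ‖x₀‖ ^ 2 * U x₀ ≤ 0 := by
  set e : Fin d → EuclideanSpace ℝ (Fin d) := fun i => EuclideanSpace.single i 1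
  have hdir : ∀ i, ∀ t : ℝ, HasDerivAt (fun t => U (x₀ + t • e i))
      (fderiv ℝ U (x₀ + t • e i) (e i)) t := fun i t =>
    ((hU.differentiable (by norm_num)) _).hasFDerivAt.hasDerivAt_comp_add_smul
  have hdir2 : ∀ i, HasDerivAt (fun t : ℝ => fderiv ℝ U (x₀ + t • e i) (e i))
      (fderiv ℝ (fun y => fderiv ℝ U y (e i)) x₀ (e i)) 0 := by
    intro i
    have hdiff : Differentiable ℝ (fun y => fderiv ℝ U y (e i)) :=
      ((hU.fderiv_right (m := 1) (by norm_num)).clm_apply contDiff_const).differentiable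
        (by norm_num)
    simpa using (hdiff (x₀ + (0 : ℝ) • e i)).hasFDerivAt.hasDerivAt_comp_add_smul
  have hline : ∀ i, IsLocalMax
      (fun t => U (x₀ + t • e i) * (‖x₀‖ ^ 2 + 2 * x₀ i * t + t ^ 2) ^ γ) 0 := by
    intro i
    have := IsLocalMax.comp_continuous (g := fun t : ℝ => x₀ + t • e i) (b := 0)
      (by simpa using hmax) (by fun_prop)
    simpa [Function.comp_def, e, EuclideanSpace.sq_norm_add_smul_single] using this
  have hsum := Finset.sum_nonpos fun i (_ : i ∈ Finset.univ) =>
    (hline i).second_deriv_le_of_mul_rpow_quadratic (by positivity) (.of_forall (hdir i))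
      (hdir2 i)
  simp only [zero_smul, add_zero] at hsum
  refine Eq.trans_le ?_ hsum
  rw [Finset.sum_add_distrib, ← Finset.mul_sum, Finset.sum_sub_distrib, Finset.sum_const,
    ← Finset.sum_div, ← Finset.mul_sum, ← EuclideanSpace.real_norm_sq_eq]
  simp only [EuclLaplacian, e, Finset.card_univ, Fintype.card_fin, nsmul_eq_mul]
  field_simp
  ring

theorem euclLaplacian_neg {d : ℕ} (u : EuclideanSpace ℝ (Fin d) → ℝ) :
    EuclLaplacian (-u) = -EuclLaplacian u := by
  funext x
  simp [EuclLaplacian, fderiv_neg]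

theorem IsOpen.closure_connectedComponentIn_inter_subset {α : Type*} [TopologicalSpace α]
    [LocallyConnectedSpace α] {F : Set α} (hF : IsOpen F) (x : α) :
    closure (connectedComponentIn F x) ∩ F ⊆ connectedComponentIn F x := by
  rintro y ⟨hy, hyF⟩
  obtain ⟨z, hzy, hzx⟩ := mem_closure_iff_nhds.mp hy _
    (hF.connectedComponentIn.mem_nhds (mem_connectedComponentIn hyF))
  rw [connectedComponentIn_eq hzx, ← connectedComponentIn_eq hzy]
  exact mem_connectedComponentIn hyF

theorem IsPreconnected.pos_of_pos {α : Type*} [TopologicalSpace α] {s : Set α}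
    (hs : IsPreconnected s) {u : α → ℝ} (hu : ContinuousOn u s) (hne : ∀ y ∈ s, u y ≠ 0)
    {x : α} (hx : x ∈ s) (hux : 0 < u x) {y : α} (hy : y ∈ s) : 0 < u y := by
  by_contra! huy
  obtain ⟨w, hw, hw0⟩ := hs.intermediate_value hy hx hu ⟨huy, hux.le⟩
  exact hne w hw hw0

theorem exists_ne_zero_isLocalMax_mul_norm_sq_rpow {E : Type*} [NormedAddCommGroup E]
    [NormedSpace ℝ E] [ProperSpace E] [Nontrivial E] {Ω : Set E} (hΩ : IsOpen Ω)
    (hΩb : Bornology.IsBounded Ω) (hne : Ω.Nonempty) {U : E → ℝ} (hU : Continuous U)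
    (hpos : ∀ y ∈ Ω, 0 < U y) (hbdry : ∀ y ∈ closure Ω \ Ω, U y = 0) {γ : ℝ} (hγ : 0 < γ) :
    ∃ x₀ ∈ Ω, x₀ ≠ 0 ∧ IsLocalMax (fun y => U y * (‖y‖ ^ 2) ^ γ) x₀ := by
  set h := fun y : E => U y * (‖y‖ ^ 2) ^ γ
  have hh : Continuous h :=
    hU.mul ((continuous_norm.pow 2).rpow_const fun _ => Or.inr hγ.le)
  obtain ⟨z, hzΩ, hz0⟩ : (Ω ∩ {0}ᶜ).Nonempty :=
    (dense_compl_singleton 0).inter_open_nonempty Ω hΩ hne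
  have hz : 0 < h z :=
    mul_pos (hpos z hzΩ) (Real.rpow_pos_of_pos (pow_pos (norm_pos_iff.2 hz0) 2) γ)
  obtain ⟨x₀, hx₀Ω, hx₀max⟩ := hΩb.isCompact_closure.exists_isMaxOn_mem_subset
    hh.continuousOn (subset_closure hzΩ) fun y hy => by simpa [h, hbdry y hy] using hz
  refine ⟨x₀, hx₀Ω, ?_, hx₀max.isLocalMax (mem_of_superset (hΩ.mem_nhds hx₀Ω) subset_closure)⟩
  rintro rfl
  have h0 : h 0 = 0 := by simp [h, Real.zero_rpow hγ.ne']
  exact (hz.trans_le (hx₀max (subset_closure hzΩ))).ne' h0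

theorem not_connectedComponentIn_subset_ball_of_pos {d : ℕ} (hd : 2 < d) {v : ℝ → ℝ} {rd : ℝ}
    (hpos : ∀ r ∈ Set.Ioo (0 : ℝ) rd, v r + ((d : ℝ) - 2) ^ 2 / (4 * r ^ 2) > 0)
    {lam : ℝ} (hlam : lam < 0) {U : EuclideanSpace ℝ (Fin d) → ℝ} (hU : ContDiff ℝ 2 U)
    (heq : ∀ x : EuclideanSpace ℝ (Fin d), x ≠ 0 →
      -EuclLaplacian U x + v ‖x‖ * U x = lam * U x)
    {x : EuclideanSpace ℝ (Fin d)} (hx : 0 < U x) :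
    ¬ connectedComponentIn {y | U y ≠ 0} x ⊆ Metric.ball 0 rd := by
  intro hsub
  set Ω := connectedComponentIn {y | U y ≠ 0} x
  have hS : IsOpen {y | U y ≠ 0} := isOpen_ne_fun hU.continuous continuous_const
  have hxΩ : x ∈ Ω := mem_connectedComponentIn hx.ne'
  have hUpos : ∀ y ∈ Ω, 0 < U y := fun y hy =>
    isPreconnected_connectedComponentIn.pos_of_pos hU.continuous.continuousOn
      (fun _ hw => connectedComponentIn_subset _ _ hw) hxΩ hx hy
  have hbdry : ∀ y ∈ closure Ω \ Ω, U y = 0 := fun y hy =>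
    not_not.mp fun h => hy.2 (hS.closure_connectedComponentIn_inter_subset x ⟨hy.1, h⟩)
  -- `γ = (d - 2) / 4` maximizes `2γ(d - 2 - 2γ)`; the maximum `(d - 2)² / 4` is Hardy's constant.
  set γ : ℝ := (d - 2) / 4
  have hγ : 0 < γ := by
    have : (2 : ℝ) < d := by exact_mod_cast hd
    simp only [γ]
    linarith
  have : NeZero d := ⟨by omega⟩
  obtain ⟨x₀, hx₀Ω, hx₀, hmax⟩ := exists_ne_zero_isLocalMax_mul_norm_sq_rpow
    hS.connectedComponentIn (Metric.isBounded_ball.subset hsub) ⟨x, hxΩ⟩ hU.continuous hUpos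
    hbdry hγ
  have key := hmax.euclLaplacian_add_le_of_mul_rpow hU hx₀
  have hr := hpos ‖x₀‖ ⟨norm_pos_iff.2 hx₀, by simpa using hsub hx₀Ω⟩
  have hcoef : 2 * γ * (d - 2 - 2 * γ) / ‖x₀‖ ^ 2 = ((d : ℝ) - 2) ^ 2 / (4 * ‖x₀‖ ^ 2) := by
    simp only [γ]
    field_simp
    ring
  have hneg : (v ‖x₀‖ - lam + ((d : ℝ) - 2) ^ 2 / (4 * ‖x₀‖ ^ 2)) * U x₀ ≤ 0 := by
    rw [hcoef] at key
    linear_combination key + heq x₀ hx₀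
  exact hneg.not_gt (mul_pos (by linarith) (hUpos x₀ hx₀Ω))

theorem stmt1_general (d : ℕ) (hd : 3 ≤ d) (v : ℝ → ℝ)
    (rd : ℝ)
    (hpos : ∀ r ∈ Set.Ioo (0 : ℝ) rd, v r + ((d : ℝ) - 2) ^ 2 / (4 * r ^ 2) > 0)
    (lam : ℝ) (hlam : lam < 0) (u : EuclideanSpace ℝ (Fin d) → ℝ)
    (hu : ContDiff ℝ 2 u)
    (heq : ∀ x : EuclideanSpace ℝ (Fin d), x ≠ 0 →
      -EuclLaplacian u x + v ‖x‖ * u x = lam * u x)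
    (Ω : Set (EuclideanSpace ℝ (Fin d)))
    (hΩ : ∃ x ∈ {y | u y ≠ 0}, Ω = connectedComponentIn {y | u y ≠ 0} x) :
    ¬ Ω ⊆ Metric.ball (0 : EuclideanSpace ℝ (Fin d)) rd := by
  obtain ⟨x, hx, rfl⟩ := hΩ
  rcases (hx : u x ≠ 0).lt_or_gt with hneg | hpos'
  · have heq' : ∀ y : EuclideanSpace ℝ (Fin d), y ≠ 0 →
        -EuclLaplacian (-u) y + v ‖y‖ * (-u) y = lam * (-u) y := fun y hy => by
      rw [euclLaplacian_neg]
      simp only [Pi.neg_apply]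
      linear_combination -heq y hy
    simpa using not_connectedComponentIn_subset_ball_of_pos hd hpos hlam hu.neg heq'
      (x := x) (by simpa using hneg)
  · exact not_connectedComponentIn_subset_ball_of_pos hd hpos hlam hu heq hpos'

/-- Case B, `d ≥ 3`: no nodal domain of an eigenfunction with negative eigenvalue is
contained in the ball `B(0, r_d)` on which `v(r) + (d-2)²/(4r²) > 0`. -/
theorem stmt1 (d : ℕ) (hd : 3 ≤ d) (v : ℝ → ℝ) (hv : ContinuousOn v (Set.Ioi 0))
    (rd : ℝ) (hrd : 0 < rd)
    (hpos : ∀ r ∈ Set.Ioo (0 : ℝ) rd, v r + ((d : ℝ) - 2) ^ 2 / (4 * r ^ 2) > 0)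
    (lam : ℝ) (hlam : lam < 0) (u : EuclideanSpace ℝ (Fin d) → ℝ)
    (hu : ContDiff ℝ 2 u) (hu0 : u ≠ 0)
    (huL2 : MemLp u 2 volume)
    (hgradL2 : MemLp (fun x => ‖gradient u x‖) 2 volume)
    (heq : ∀ x : EuclideanSpace ℝ (Fin d), x ≠ 0 →
      -EuclLaplacian u x + v ‖x‖ * u x = lam * u x)
    (Ω : Set (EuclideanSpace ℝ (Fin d)))
    (hΩ : ∃ x ∈ {y | u y ≠ 0}, Ω = connectedComponentIn {y | u y ≠ 0} x) :
    ¬ Ω ⊆ Metric.ball (0 : EuclideanSpace ℝ (Fin d)) rd :=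
  stmt1_general d hd v rd hpos lam hlam u hu heq Ω hΩ
end

section
/- Let d ≥ 3. For every smooth compactly supported function u : ℝ^d → ℝ, one has ∫_{ℝ^d} ‖∇u(x)‖² dx ≥ ((d-2)/2)² · ∫_{ℝ^d} u(x)²/‖x‖² dx. -/
open MeasureTheory Finset
set_option maxHeartbeats 1000000
open scoped RealInnerProductSpace

private lemma hardy_aux (d : ℕ) (hd : 3 ≤ d) (u : EuclideanSpace ℝ (Fin d) → ℝ)
    (hu : ContDiff ℝ (⊤ : ℕ∞) u) (hsupp : HasCompactSupport u) {ε : ℝ} (hε : 0 < ε) :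
    (((d : ℝ) - 2) / 2) ^ 2 *
        ∫ x : EuclideanSpace ℝ (Fin d), u x * u x * (‖x‖ ^ 2 * ((‖x‖ ^ 2 + ε) ^ 2)⁻¹) ≤
      ∫ x : EuclideanSpace ℝ (Fin d), ‖gradient u x‖ ^ 2 := by
  have hd3 : (3:ℝ) ≤ (d:ℝ) := by exact_mod_cast hd
  have hud : Differentiable ℝ u := hu.differentiable (by simp)
  have hfc : Continuous (fderiv ℝ u) := hu.continuous_fderiv (by simp)
  have hqpos : ∀ x : EuclideanSpace ℝ (Fin d), 0 < ‖x‖ ^ 2 + ε := fun x => by positivity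
  have hqc : Continuous fun x : EuclideanSpace ℝ (Fin d) => ‖x‖ ^ 2 + ε :=
    ((continuous_norm.pow 2).add continuous_const)
  have hqinv : Continuous fun x : EuclideanSpace ℝ (Fin d) => (‖x‖ ^ 2 + ε)⁻¹ :=
    hqc.inv₀ fun x => (hqpos x).ne'
  have hq2inv : Continuous fun x : EuclideanSpace ℝ (Fin d) => ((‖x‖ ^ 2 + ε) ^ 2)⁻¹ :=
    (hqc.pow 2).inv₀ fun x => pow_ne_zero 2 (hqpos x).ne'
  -- integrability helper
  have key_int : ∀ f : EuclideanSpace ℝ (Fin d) → ℝ, Continuous f →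
      (∀ x, u x = 0 → f x = 0) → Integrable f := by
    intro f hf h
    refine hf.integrable_of_hasCompactSupport (hsupp.mono ?_)
    intro x hx
    simp only [ Function.mem_support] at hx ⊢
    exact fun h0 => hx (h x h0)
  -- gradient facts
  have hgrad_inner : ∀ x v : EuclideanSpace ℝ (Fin d), ⟪gradient u x, v⟫ = fderiv ℝ u x v := by
    intro x v; simp [gradient, InnerProductSpace.toDual_symm_apply]
  have hgc : Continuous (gradient u) := by
    show Continuous fun x => (InnerProductSpace.toDual ℝ _).symm (fderiv ℝ u x)
    exact (InnerProductSpace.toDual ℝ _).symm.continuous.comp hfc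
  have hgsupp : HasCompactSupport (gradient u) := by
    have h1 : HasCompactSupport (fderiv ℝ u) := hsupp.fderiv ℝ
    exact h1.comp_left (g := (InnerProductSpace.toDual ℝ _).symm) (by simp)
  -- derivative constructions
  have hqd : ∀ x : EuclideanSpace ℝ (Fin d),
      HasFDerivAt (fun x : EuclideanSpace ℝ (Fin d) => ‖x‖ ^ 2 + ε) ((2:ℕ) • innerSL ℝ x) x :=
    fun x => ((hasStrictFDerivAt_norm_sq x).hasFDerivAt).add_const ε
  have hinv : ∀ x : EuclideanSpace ℝ (Fin d),
      HasFDerivAt (fun x : EuclideanSpace ℝ (Fin d) => (‖x‖ ^ 2 + ε)⁻¹)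
        ((-(((‖x‖ ^ 2 + ε)) ^ 2)⁻¹) • ((2:ℕ) • innerSL ℝ x)) x := by
    intro x
    have h2 : HasDerivAt (fun y : ℝ => y⁻¹) (-((‖x‖ ^ 2 + ε) ^ 2)⁻¹) (‖x‖ ^ 2 + ε) := by
      simpa using hasDerivAt_inv (hqpos x).ne'
    exact h2.comp_hasFDerivAt x (hqd x)
  have hfd : ∀ x, HasFDerivAt (fun y => u y * u y) ((2 * u x) • fderiv ℝ u x) x := by
    intro x
    have := (hud x).hasFDerivAt.mul (hud x).hasFDerivAt
    rw [show (2 * u x) • fderiv ℝ u x = u x • fderiv ℝ u x + u x • fderiv ℝ u x by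
      rw [← add_smul, two_mul]]
    exact this
  -- per-coordinate integration by parts
  have ibp : ∀ i : Fin d,
      (∫ x : EuclideanSpace ℝ (Fin d),
          u x * u x * (x i * (-((‖x‖ ^ 2 + ε) ^ 2)⁻¹ * (2 * x i)) + (‖x‖ ^ 2 + ε)⁻¹)) =
        - ∫ x : EuclideanSpace ℝ (Fin d),
          (2 * u x * fderiv ℝ u x (EuclideanSpace.single i 1)) * (x i * (‖x‖ ^ 2 + ε)⁻¹) := by
    intro i
    set v : EuclideanSpace ℝ (Fin d) := EuclideanSpace.single i 1 with hv
    have hgd : ∀ x : EuclideanSpace ℝ (Fin d),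
        HasFDerivAt (fun x : EuclideanSpace ℝ (Fin d) => x i * (‖x‖ ^ 2 + ε)⁻¹)
          (x i • ((-(((‖x‖ ^ 2 + ε)) ^ 2)⁻¹) • ((2:ℕ) • innerSL ℝ x)) +
            (‖x‖ ^ 2 + ε)⁻¹ • (EuclideanSpace.proj i : EuclideanSpace ℝ (Fin d) →L[ℝ] ℝ)) x :=
      fun x => ((EuclideanSpace.proj i).hasFDerivAt).mul (hinv x)
    have heval : ∀ x : EuclideanSpace ℝ (Fin d),
        (x i • ((-(((‖x‖ ^ 2 + ε)) ^ 2)⁻¹) • ((2:ℕ) • innerSL ℝ x)) +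
            (‖x‖ ^ 2 + ε)⁻¹ • (EuclideanSpace.proj i : EuclideanSpace ℝ (Fin d) →L[ℝ] ℝ)) v =
          x i * (-((‖x‖ ^ 2 + ε) ^ 2)⁻¹ * (2 * x i)) + (‖x‖ ^ 2 + ε)⁻¹ := by
      intro x
      have hxv : ⟪x, v⟫ = x i := by
        rw [hv]; simp [EuclideanSpace.inner_single_right]
      simp [two_smul, hxv, hv, EuclideanSpace.single_apply]
      rw [← hv, hxv]
      ring
    have hfeval : ∀ x : EuclideanSpace ℝ (Fin d),
        ((2 * u x) • fderiv ℝ u x) v = 2 * u x * fderiv ℝ u x v := by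
      intro x; simp
    -- integrability
    have hI1 : Integrable fun x : EuclideanSpace ℝ (Fin d) =>
        (2 * u x * fderiv ℝ u x v) * (x i * (‖x‖ ^ 2 + ε)⁻¹) := by
      refine key_int _ ?_ fun x h0 => by simp [h0]
      exact ((continuous_const.mul hu.continuous).mul (hfc.clm_apply continuous_const)).mul
        (((EuclideanSpace.proj i).continuous).mul hqinv)
    have hI2 : Integrable fun x : EuclideanSpace ℝ (Fin d) =>
        u x * u x * (x i * (-((‖x‖ ^ 2 + ε) ^ 2)⁻¹ * (2 * x i)) + (‖x‖ ^ 2 + ε)⁻¹) := by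
      refine key_int _ ?_ fun x h0 => by simp [h0]
      exact (hu.continuous.mul hu.continuous).mul
        ((((EuclideanSpace.proj i).continuous).mul ((hq2inv.neg).mul
          (continuous_const.mul ((EuclideanSpace.proj i).continuous)))).add hqinv)
    have hI3 : Integrable fun x : EuclideanSpace ℝ (Fin d) =>
        (u x * u x) * (x i * (‖x‖ ^ 2 + ε)⁻¹) := by
      refine key_int _ ?_ fun x h0 => by simp [h0]
      exact (hu.continuous.mul hu.continuous).mul
        (((EuclideanSpace.proj i).continuous).mul hqinv)
    have h := integral_bilinear_hasFDerivAt_right_eq_neg_left_of_integrable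
      (μ := volume) (B := ContinuousLinearMap.mul ℝ ℝ) (v := v)
      (f := fun y => u y * u y) (f' := fun x => (2 * u x) • fderiv ℝ u x)
      (g := fun x : EuclideanSpace ℝ (Fin d) => x i * (‖x‖ ^ 2 + ε)⁻¹)
      (g' := fun x => x i • ((-(((‖x‖ ^ 2 + ε)) ^ 2)⁻¹) • ((2:ℕ) • innerSL ℝ x)) +
            (‖x‖ ^ 2 + ε)⁻¹ • (EuclideanSpace.proj i : EuclideanSpace ℝ (Fin d) →L[ℝ] ℝ))
      ?_ ?_ ?_ (fun x _ => hfd x) (fun x _ => hgd x)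
    · simp only [ContinuousLinearMap.mul_apply'] at h
      simp_rw [heval, hfeval] at h
      exact h
    · simp only [ContinuousLinearMap.mul_apply']
      simp_rw [hfeval]
      exact hI1
    · simp only [ContinuousLinearMap.mul_apply']
      simp_rw [heval]
      exact hI2
    · simp only [ContinuousLinearMap.mul_apply']
      exact hI3
  -- summed integrands
  have hA : ∀ x : EuclideanSpace ℝ (Fin d),
      ∑ i, u x * u x * (x i * (-((‖x‖ ^ 2 + ε) ^ 2)⁻¹ * (2 * x i)) + (‖x‖ ^ 2 + ε)⁻¹)
        = u x * u x * ((d:ℝ) * (‖x‖ ^ 2 + ε)⁻¹ - 2 * ‖x‖ ^ 2 * ((‖x‖ ^ 2 + ε) ^ 2)⁻¹) := by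
    intro x
    have hn : ‖x‖ ^ 2 = ∑ i, x i ^ 2 := by
      rw [EuclideanSpace.norm_eq, Real.sq_sqrt (by positivity)]
      simp [sq_abs]
    rw [← Finset.mul_sum]
    congr 1
    have h1 : ∀ i : Fin d, x i * (-((‖x‖ ^ 2 + ε) ^ 2)⁻¹ * (2 * x i)) + (‖x‖ ^ 2 + ε)⁻¹
        = (-((‖x‖ ^ 2 + ε) ^ 2)⁻¹ * 2) * x i ^ 2 + (‖x‖ ^ 2 + ε)⁻¹ := fun i => by ring
    simp_rw [h1]
    rw [Finset.sum_add_distrib, ← Finset.mul_sum, ← hn, Finset.sum_const, card_univ]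
    simp [nsmul_eq_mul]
    ring
  have hB : ∀ x : EuclideanSpace ℝ (Fin d),
      ∑ i, (2 * u x * fderiv ℝ u x (EuclideanSpace.single i 1)) * (x i * (‖x‖ ^ 2 + ε)⁻¹)
        = 2 * u x * fderiv ℝ u x x * (‖x‖ ^ 2 + ε)⁻¹ := by
    intro x
    have h1 : ∀ i : Fin d, (2 * u x * fderiv ℝ u x (EuclideanSpace.single i 1)) * (x i * (‖x‖ ^ 2 + ε)⁻¹)
        = (2 * u x * (‖x‖ ^ 2 + ε)⁻¹) * fderiv ℝ u x (x i • EuclideanSpace.single i 1) := fun i => by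
      rw [(fderiv ℝ u x).map_smul]; simp; ring
    simp_rw [h1]
    rw [← Finset.mul_sum, ← map_sum (fderiv ℝ u x) _ Finset.univ]
    have hx : (∑ i, x i • EuclideanSpace.single i (1:ℝ)) = x := by
      ext j
      have : (∑ i, x i • EuclideanSpace.single i (1:ℝ)) j
          = ∑ i, (x i • EuclideanSpace.single i (1:ℝ)) j := by rw [WithLp.ofLp_sum, Finset.sum_apply]
      rw [this]; simp [EuclideanSpace.single_apply]
    rw [hx]; ring
  -- integrability of the four main integrands
  have hw1 : Integrable fun x : EuclideanSpace ℝ (Fin d) => ‖gradient u x‖ ^ 2 := by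
    refine ((hgc.norm.pow 2)).integrable_of_hasCompactSupport ?_
    exact hgsupp.mono fun x hx => by
      simp only [Function.mem_support] at hx ⊢
      exact fun h0 => hx (by simp [h0])
  have hw2 : Integrable fun x : EuclideanSpace ℝ (Fin d) =>
      2 * u x * fderiv ℝ u x x * (‖x‖ ^ 2 + ε)⁻¹ := by
    refine key_int _ ?_ fun x h0 => by simp [h0]
    exact ((continuous_const.mul hu.continuous).mul (hfc.clm_apply continuous_id)).mul hqinv
  have hw3 : Integrable fun x : EuclideanSpace ℝ (Fin d) =>
      u x * u x * (‖x‖ ^ 2 * ((‖x‖ ^ 2 + ε) ^ 2)⁻¹) := by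
    refine key_int _ ?_ fun x h0 => by simp [h0]
    exact (hu.continuous.mul hu.continuous).mul ((continuous_norm.pow 2).mul hq2inv)
  have hw4 : Integrable fun x : EuclideanSpace ℝ (Fin d) =>
      u x * u x * ((d:ℝ) * (‖x‖ ^ 2 + ε)⁻¹ - 2 * ‖x‖ ^ 2 * ((‖x‖ ^ 2 + ε) ^ 2)⁻¹) := by
    refine key_int _ ?_ fun x h0 => by simp [h0]
    exact (hu.continuous.mul hu.continuous).mul
      ((continuous_const.mul hqinv).sub ((continuous_const.mul (continuous_norm.pow 2)).mul hq2inv))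
  -- per-i integrability (needed to exchange sum and integral)
  have hIA : ∀ i : Fin d, Integrable fun x : EuclideanSpace ℝ (Fin d) =>
      u x * u x * (x i * (-((‖x‖ ^ 2 + ε) ^ 2)⁻¹ * (2 * x i)) + (‖x‖ ^ 2 + ε)⁻¹) := by
    intro i
    refine key_int _ ?_ fun x h0 => by simp [h0]
    exact (hu.continuous.mul hu.continuous).mul
      ((((EuclideanSpace.proj i).continuous).mul ((hq2inv.neg).mul
        (continuous_const.mul ((EuclideanSpace.proj i).continuous)))).add hqinv)
  have hIB : ∀ i : Fin d, Integrable fun x : EuclideanSpace ℝ (Fin d) =>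
      (2 * u x * fderiv ℝ u x (EuclideanSpace.single i 1)) * (x i * (‖x‖ ^ 2 + ε)⁻¹) := by
    intro i
    refine key_int _ ?_ fun x h0 => by simp [h0]
    exact ((continuous_const.mul hu.continuous).mul (hfc.clm_apply continuous_const)).mul
      (((EuclideanSpace.proj i).continuous).mul hqinv)
  -- combined integration by parts
  have IBP : (∫ x : EuclideanSpace ℝ (Fin d),
        u x * u x * ((d:ℝ) * (‖x‖ ^ 2 + ε)⁻¹ - 2 * ‖x‖ ^ 2 * ((‖x‖ ^ 2 + ε) ^ 2)⁻¹)) =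
      - ∫ x : EuclideanSpace ℝ (Fin d), 2 * u x * fderiv ℝ u x x * (‖x‖ ^ 2 + ε)⁻¹ := by
    have h1 : (∫ x : EuclideanSpace ℝ (Fin d),
          u x * u x * ((d:ℝ) * (‖x‖ ^ 2 + ε)⁻¹ - 2 * ‖x‖ ^ 2 * ((‖x‖ ^ 2 + ε) ^ 2)⁻¹)) =
        ∑ i, ∫ x : EuclideanSpace ℝ (Fin d),
          u x * u x * (x i * (-((‖x‖ ^ 2 + ε) ^ 2)⁻¹ * (2 * x i)) + (‖x‖ ^ 2 + ε)⁻¹) := by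
      rw [← integral_finset_sum _ fun i _ => hIA i]
      exact integral_congr_ae (Filter.Eventually.of_forall fun x => (hA x).symm)
    have h2 : (∫ x : EuclideanSpace ℝ (Fin d), 2 * u x * fderiv ℝ u x x * (‖x‖ ^ 2 + ε)⁻¹) =
        ∑ i, ∫ x : EuclideanSpace ℝ (Fin d),
          (2 * u x * fderiv ℝ u x (EuclideanSpace.single i 1)) * (x i * (‖x‖ ^ 2 + ε)⁻¹) := by
      rw [← integral_finset_sum _ fun i _ => hIB i]
      exact integral_congr_ae (Filter.Eventually.of_forall fun x => (hB x).symm)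
    rw [h1, h2, ← Finset.sum_neg_distrib]
    exact Finset.sum_congr rfl fun i _ => ibp i
  -- pointwise expansion of the square
  set c : ℝ := ((d : ℝ) - 2) / 2 with hc
  have hcpos : 0 < c := by rw [hc]; linarith
  have hexp : ∀ x : EuclideanSpace ℝ (Fin d),
      ‖gradient u x + (c * u x * (‖x‖ ^ 2 + ε)⁻¹) • x‖ ^ 2 =
        ‖gradient u x‖ ^ 2 + c * (2 * u x * fderiv ℝ u x x * (‖x‖ ^ 2 + ε)⁻¹)
          + c ^ 2 * (u x * u x * (‖x‖ ^ 2 * ((‖x‖ ^ 2 + ε) ^ 2)⁻¹)) := by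
    intro x
    have hne : (‖x‖ ^ 2 + ε) ≠ 0 := (hqpos x).ne'
    rw [norm_add_sq_real, real_inner_smul_right, hgrad_inner, norm_smul, Real.norm_eq_abs,
      mul_pow, sq_abs]
    field_simp
  have hnn : 0 ≤ (∫ x : EuclideanSpace ℝ (Fin d), ‖gradient u x‖ ^ 2)
      + c * (∫ x : EuclideanSpace ℝ (Fin d), 2 * u x * fderiv ℝ u x x * (‖x‖ ^ 2 + ε)⁻¹)
      + c ^ 2 * ∫ x : EuclideanSpace ℝ (Fin d), u x * u x * (‖x‖ ^ 2 * ((‖x‖ ^ 2 + ε) ^ 2)⁻¹) := by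
    have hint : 0 ≤ ∫ x : EuclideanSpace ℝ (Fin d),
        (‖gradient u x‖ ^ 2 + c * (2 * u x * fderiv ℝ u x x * (‖x‖ ^ 2 + ε)⁻¹)
          + c ^ 2 * (u x * u x * (‖x‖ ^ 2 * ((‖x‖ ^ 2 + ε) ^ 2)⁻¹))) :=
      integral_nonneg fun x => (hexp x) ▸ sq_nonneg _
    have s2 : (∫ x : EuclideanSpace ℝ (Fin d),
        (‖gradient u x‖ ^ 2 + c * (2 * u x * fderiv ℝ u x x * (‖x‖ ^ 2 + ε)⁻¹)
          + c ^ 2 * (u x * u x * (‖x‖ ^ 2 * ((‖x‖ ^ 2 + ε) ^ 2)⁻¹)))) =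
        (∫ x : EuclideanSpace ℝ (Fin d),
          (‖gradient u x‖ ^ 2 + c * (2 * u x * fderiv ℝ u x x * (‖x‖ ^ 2 + ε)⁻¹)))
        + ∫ x : EuclideanSpace ℝ (Fin d), c ^ 2 * (u x * u x * (‖x‖ ^ 2 * ((‖x‖ ^ 2 + ε) ^ 2)⁻¹)) :=
      integral_add (hw1.add (hw2.const_mul c)) (hw3.const_mul _)
    have s1 : (∫ x : EuclideanSpace ℝ (Fin d),
        (‖gradient u x‖ ^ 2 + c * (2 * u x * fderiv ℝ u x x * (‖x‖ ^ 2 + ε)⁻¹))) =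
        (∫ x : EuclideanSpace ℝ (Fin d), ‖gradient u x‖ ^ 2)
        + ∫ x : EuclideanSpace ℝ (Fin d), c * (2 * u x * fderiv ℝ u x x * (‖x‖ ^ 2 + ε)⁻¹) :=
      integral_add hw1 (hw2.const_mul c)
    rwa [s2, s1, integral_const_mul, integral_const_mul] at hint
  -- comparison of w4 and w3
  have hL_ge : ((d:ℝ) - 2) * (∫ x : EuclideanSpace ℝ (Fin d),
        u x * u x * (‖x‖ ^ 2 * ((‖x‖ ^ 2 + ε) ^ 2)⁻¹)) ≤
      ∫ x : EuclideanSpace ℝ (Fin d),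
        u x * u x * ((d:ℝ) * (‖x‖ ^ 2 + ε)⁻¹ - 2 * ‖x‖ ^ 2 * ((‖x‖ ^ 2 + ε) ^ 2)⁻¹) := by
    rw [← integral_const_mul]
    refine integral_mono (hw3.const_mul _) hw4 fun x => ?_
    have ht : 0 < ‖x‖ ^ 2 + ε := hqpos x
    have htinv : (‖x‖ ^ 2 + ε)⁻¹ = (‖x‖ ^ 2 + ε) * ((‖x‖ ^ 2 + ε) ^ 2)⁻¹ := by
      field_simp
    simp only [htinv]
    have hr : 0 < ((‖x‖ ^ 2 + ε) ^ 2)⁻¹ := by positivity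
    have hu2 : 0 ≤ u x * u x := mul_self_nonneg _
    have hs : 0 ≤ ‖x‖ ^ 2 := by positivity
    nlinarith [mul_nonneg (mul_nonneg hu2 hr.le)
      (mul_nonneg (by exact_mod_cast Nat.zero_le d : (0:ℝ) ≤ (d:ℝ)) hε.le)]
  -- conclude
  have hJ := IBP
  set A := ∫ x : EuclideanSpace ℝ (Fin d), ‖gradient u x‖ ^ 2 with hA'
  set J := ∫ x : EuclideanSpace ℝ (Fin d), 2 * u x * fderiv ℝ u x x * (‖x‖ ^ 2 + ε)⁻¹ with hJ'
  set K := ∫ x : EuclideanSpace ℝ (Fin d), u x * u x * (‖x‖ ^ 2 * ((‖x‖ ^ 2 + ε) ^ 2)⁻¹) with hK'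
  set L := ∫ x : EuclideanSpace ℝ (Fin d),
    u x * u x * ((d:ℝ) * (‖x‖ ^ 2 + ε)⁻¹ - 2 * ‖x‖ ^ 2 * ((‖x‖ ^ 2 + ε) ^ 2)⁻¹) with hL'
  have hscale : c * (((d:ℝ) - 2) * K) ≤ c * L := mul_le_mul_of_nonneg_left hL_ge hcpos.le
  have hcc : c * (((d:ℝ) - 2) * K) = 2 * c ^ 2 * K := by rw [hc]; ring
  -- hJ : L = -J, hnn : 0 ≤ A + c * J + c ^ 2 * K
  have hJL : J = -L := by linarith [hJ]
  nlinarith [hnn, hscale, hcc, hJL]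

/-- Hardy's inequality in `ℝ^d`, `d ≥ 3`. -/
theorem stmt4 (d : ℕ) (hd : 3 ≤ d) (u : EuclideanSpace ℝ (Fin d) → ℝ)
    (hu : ContDiff ℝ (⊤ : ℕ∞) u) (hsupp : HasCompactSupport u) :
    (∫ x : EuclideanSpace ℝ (Fin d), ‖gradient u x‖ ^ 2) ≥
      (((d : ℝ) - 2) / 2) ^ 2 * ∫ x : EuclideanSpace ℝ (Fin d), u x ^ 2 / ‖x‖ ^ 2 := by
  have hd3 : (3:ℝ) ≤ (d:ℝ) := by exact_mod_cast hd
  set c : ℝ := ((d : ℝ) - 2) / 2 with hc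
  have hcpos : 0 < c := by rw [hc]; linarith
  have hc2 : 0 < c ^ 2 := by positivity
  set A := ∫ x : EuclideanSpace ℝ (Fin d), ‖gradient u x‖ ^ 2 with hA
  have hA0 : 0 ≤ A := integral_nonneg fun x => sq_nonneg _
  set F : EuclideanSpace ℝ (Fin d) → ℝ := fun x => u x ^ 2 / ‖x‖ ^ 2 with hF
  set f : ℕ → EuclideanSpace ℝ (Fin d) → ℝ := fun n x =>
    u x * u x * (‖x‖ ^ 2 * ((‖x‖ ^ 2 + 1 / ((n:ℝ) + 1)) ^ 2)⁻¹) with hf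
  have hεpos : ∀ n : ℕ, (0:ℝ) < 1 / ((n:ℝ) + 1) := fun n => by positivity
  have hbound : ∀ n : ℕ, c ^ 2 * ∫ x, f n x ≤ A :=
    fun n => hardy_aux d hd u hu hsupp (hεpos n)
  have hfnonneg : ∀ n x, 0 ≤ f n x := fun n x => by
    have := mul_self_nonneg (u x); positivity
  have hFnonneg : ∀ x, 0 ≤ F x := fun x => by positivity
  -- monotonicity in n
  have hmono : ∀ x, Monotone fun n => f n x := by
    intro x n m hnm
    have h1 : (1:ℝ) / ((m:ℝ) + 1) ≤ 1 / ((n:ℝ) + 1) := by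
      apply one_div_le_one_div_of_le (by positivity)
      have : (n:ℝ) ≤ (m:ℝ) := by exact_mod_cast hnm
      linarith
    simp only [hf]
    have hu2 : 0 ≤ u x * u x := mul_self_nonneg (u x)
    have h2 : (‖x‖ ^ 2 + 1 / ((m:ℝ) + 1)) ^ 2 ≤ (‖x‖ ^ 2 + 1 / ((n:ℝ) + 1)) ^ 2 :=
      pow_le_pow_left₀ (by positivity) (by linarith) 2
    have h3 : ((‖x‖ ^ 2 + 1 / ((n:ℝ) + 1)) ^ 2)⁻¹ ≤ ((‖x‖ ^ 2 + 1 / ((m:ℝ) + 1)) ^ 2)⁻¹ :=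
      inv_anti₀ (by positivity) h2
    exact mul_le_mul_of_nonneg_left
      (mul_le_mul_of_nonneg_left h3 (sq_nonneg ‖x‖)) hu2
  -- pointwise convergence
  have htend : ∀ x, Filter.Tendsto (fun n => f n x) Filter.atTop (nhds (F x)) := by
    intro x
    by_cases hx : x = 0
    · have h0 : ∀ n, f n x = 0 := fun n => by simp [hf, hx]
      have hF0 : F x = 0 := by simp [hF, hx]
      simp only [h0, hF0]
      exact tendsto_const_nhds
    · have hxn : (0:ℝ) < ‖x‖ ^ 2 := by
        exact pow_pos (norm_pos_iff.mpr hx) 2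
      have h1 : Filter.Tendsto (fun n : ℕ => ‖x‖ ^ 2 + 1 / ((n:ℝ) + 1)) Filter.atTop
          (nhds (‖x‖ ^ 2 + 0)) :=
        tendsto_const_nhds.add tendsto_one_div_add_atTop_nhds_zero_nat
      have h2 : Filter.Tendsto (fun n : ℕ => ((‖x‖ ^ 2 + 1 / ((n:ℝ) + 1)) ^ 2)⁻¹) Filter.atTop
          (nhds (((‖x‖ ^ 2 + 0) ^ 2)⁻¹)) :=
        (h1.pow 2).inv₀ (by positivity)
      have h3 := (tendsto_const_nhds (x := u x * u x)).mul
        ((tendsto_const_nhds (x := ‖x‖ ^ 2)).mul h2)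
      have heq : u x * u x * (‖x‖ ^ 2 * (((‖x‖ ^ 2 + 0) ^ 2)⁻¹)) = F x := by
        rw [add_zero, hF]
        field_simp
      rw [heq] at h3
      exact h3
  -- integrability of each f n
  have hint : ∀ n, Integrable (f n) := by
    intro n
    have hq2inv : Continuous fun x : EuclideanSpace ℝ (Fin d) =>
        ((‖x‖ ^ 2 + 1 / ((n:ℝ) + 1)) ^ 2)⁻¹ :=
      (((continuous_norm.pow 2).add continuous_const).pow 2).inv₀ fun x =>
        pow_ne_zero 2 (add_pos_of_nonneg_of_pos (sq_nonneg _) (hεpos n)).ne'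
    have hcont : Continuous (f n) :=
      (hu.continuous.mul hu.continuous).mul ((continuous_norm.pow 2).mul hq2inv)
    refine hcont.integrable_of_hasCompactSupport (hsupp.mono ?_)
    intro x hx
    simp only [Function.mem_support] at hx ⊢
    intro h0
    exact hx (by simp [hf, h0])
  -- pass to the limit via the monotone convergence theorem for lintegrals
  have hmeasf : ∀ n, Measurable (f n) := fun n =>
    ((hu.continuous.mul hu.continuous).mul ((continuous_norm.pow 2).mul
      ((((continuous_norm.pow 2).add continuous_const).pow 2).inv₀ fun x =>
        pow_ne_zero 2 (add_pos_of_nonneg_of_pos (sq_nonneg _) (hεpos n)).ne'))).measurable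
  have hsupeq : ∀ x, (⨆ n, ENNReal.ofReal (f n x)) = ENNReal.ofReal (F x) := by
    intro x
    refine tendsto_nhds_unique (tendsto_atTop_iSup fun n m h => ENNReal.ofReal_le_ofReal (hmono x h)) ?_
    exact (ENNReal.continuous_ofReal.tendsto _).comp (htend x)
  have hlsup : (∫⁻ x, ENNReal.ofReal (F x)) = ⨆ n, ∫⁻ x, ENNReal.ofReal (f n x) := by
    rw [← lintegral_iSup (fun n => (hmeasf n).ennreal_ofReal)
      (fun n m h => fun x => ENNReal.ofReal_le_ofReal (hmono x h))]
    simp_rw [hsupeq]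
  have hls : (∫⁻ x, ENNReal.ofReal (F x)) ≤ ENNReal.ofReal (A / c ^ 2) := by
    rw [hlsup]
    refine iSup_le fun n => ?_
    rw [← ofReal_integral_eq_lintegral_ofReal (hint n) (Filter.Eventually.of_forall (hfnonneg n))]
    exact ENNReal.ofReal_le_ofReal ((le_div_iff₀ hc2).mpr (by linarith [hbound n]))
  have hFm : AEStronglyMeasurable F volume :=
    ((hu.continuous.pow 2).measurable.div ((continuous_norm.pow 2).measurable)).aestronglyMeasurable
  have hFint : Integrable F := by
    refine ⟨hFm, ?_⟩
    rw [hasFiniteIntegral_iff_ofReal (Filter.Eventually.of_forall hFnonneg)]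
    exact lt_of_le_of_lt hls ENNReal.ofReal_lt_top
  have hFle : (∫ x, F x) ≤ A / c ^ 2 := by
    rw [integral_eq_lintegral_of_nonneg_ae (Filter.Eventually.of_forall hFnonneg) hFm]
    calc (∫⁻ x, ENNReal.ofReal (F x)).toReal
        ≤ (ENNReal.ofReal (A / c ^ 2)).toReal := ENNReal.toReal_mono ENNReal.ofReal_ne_top hls
      _ = A / c ^ 2 := ENNReal.toReal_ofReal (by positivity)
  have := (le_div_iff₀ hc2).mp hFle
  show A ≥ c ^ 2 * ∫ x : EuclideanSpace ℝ (Fin d), F x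
  linarith [this]
end

section
/- Let Ř > 0. For every smooth function u : ℝ² → ℝ with compact support contained in the open disk D(0, Ř) = {x ∈ ℝ² : ‖x‖ < Ř}, one has ∫_{ℝ²} ‖∇u(x)‖² dx ≥ (1/4) · ∫_{ℝ²} u(x)² / (‖x‖² · (log(‖x‖/Ř))²) dx. -/
open MeasureTheory Real Set

theorem lintegral_comp_polarCoord_symm' (g : ℝ × ℝ → ENNReal) :
    (∫⁻ p in polarCoord.target, ENNReal.ofReal p.1 * g (polarCoord.symm p)) = ∫⁻ p, g p := by
  set B : ℝ × ℝ → ℝ × ℝ →L[ℝ] ℝ × ℝ := fun p =>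
    LinearMap.toContinuousLinearMap (Matrix.toLin (Module.Basis.finTwoProd ℝ) (Module.Basis.finTwoProd ℝ)
      !![cos p.2, -p.1 * sin p.2; sin p.2, p.1 * cos p.2])
  have A : ∀ p ∈ polarCoord.target, HasFDerivWithinAt polarCoord.symm (B p) polarCoord.target p :=
    fun p _ => (hasFDerivAt_polarCoord_symm p).hasFDerivWithinAt
  have B_det : ∀ p, (B p).det = p.1 := by
    intro p
    conv_rhs => rw [← one_mul p.1, ← cos_sq_add_sin_sq p.2]
    simp only [B, neg_mul, LinearMap.det_toContinuousLinearMap, LinearMap.det_toLin,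
      Matrix.det_fin_two_of, sub_neg_eq_add]
    ring
  symm
  calc
    ∫⁻ p, g p = ∫⁻ p in polarCoord.source, g p := by
      rw [← setLIntegral_univ]
      exact setLIntegral_congr polarCoord_source_ae_eq_univ.symm
    _ = ∫⁻ p in polarCoord.symm '' polarCoord.target, g p := by
      rw [polarCoord.symm_image_target_eq_source]
    _ = ∫⁻ p in polarCoord.target, ENNReal.ofReal |(B p).det| * g (polarCoord.symm p) := by
      exact lintegral_image_eq_lintegral_abs_det_fderiv_mul volume
        polarCoord.open_target.measurableSet A polarCoord.symm.injOn g
    _ = ∫⁻ p in polarCoord.target, ENNReal.ofReal p.1 * g (polarCoord.symm p) := by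
      refine setLIntegral_congr_fun polarCoord.open_target.measurableSet ?_
      intro p hp
      beta_reduce
      rw [B_det, abs_of_pos hp.1]


lemma ptwise (a b r L : ℝ) (hr : 0 < r) (hL : L < 0) :
    -(2 * a * b * (-(L)⁻¹)) ≤ 1/2 * (a^2 * (1/(r * L^2))) + 2 * (r * b^2) := by
  rw [← sub_nonneg]
  have hL0 : L ≠ 0 := ne_of_lt hL
  have key : 1/2 * (a^2 * (1/(r * L^2))) + 2 * (r * b^2) - (-(2 * a * b * (-(L)⁻¹)))
      = (a - 2 * r * L * b)^2 / (2 * r * L^2) := by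
    field_simp
    ring
  rw [key]
  positivity

lemma key1d (R R' : ℝ) (h0 : 0 < R') (hlt : R' < R) (f : ℝ → ℝ)
    (hf : ContDiff ℝ (⊤ : ℕ∞) f) (hz : ∀ r, R' ≤ r → f r = 0) :
    ∫⁻ r in Ioc 0 R', ENNReal.ofReal (f r ^ 2 / (r * Real.log (r/R) ^ 2)) ≤
      4 * ∫⁻ r in Ioc 0 R', ENNReal.ofReal (r * (deriv f r)^2) := by
  have hR : 0 < R := h0.trans hlt
  set L : ℝ → ℝ := fun r => Real.log (r / R) with hLdef
  set g : ℝ → ℝ := fun r => -(L r)⁻¹ with hgdef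
  set gd : ℝ → ℝ := fun r => 1/(r * L r ^ 2) with hgddef
  have hfc : Continuous f := hf.continuous
  have hf'c : Continuous (deriv f) := hf.continuous_deriv (by simp)
  have hLneg : ∀ r, 0 < r → r < R → L r < 0 := fun r h1 h2 =>
    Real.log_neg (div_pos h1 hR) ((div_lt_one hR).2 h2)
  -- J and its properties
  set Z : ℝ → ℝ := fun r => r * (deriv f r)^2 with hZdef
  have hZc : Continuous Z := continuous_id.mul (hf'c.pow 2)
  have hJint : IntegrableOn Z (Ioc 0 R') := hZc.integrableOn_Ioc
  have hJnn : 0 ≤ᵐ[volume.restrict (Ioc 0 R')] Z := by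
    filter_upwards [ae_restrict_mem measurableSet_Ioc] with r hr
    have : (0:ℝ) ≤ r := hr.1.le
    positivity
  set J : ℝ := ∫ r in Ioc 0 R', Z r with hJdef
  -- Step A
  have stepA : ∀ ε, 0 < ε → ε < R' → ∫ r in ε..R', f r ^ 2 * gd r ≤ 4 * J := by
    intro ε hε hεR'
    have hεR : ε ≤ R' := hεR'.le
    have hsub : Icc ε R' ⊆ {r | 0 < r ∧ r < R} := fun r hr =>
      ⟨hε.trans_le hr.1, hr.2.trans_lt hlt⟩
    have huIcc : uIcc ε R' = Icc ε R' := uIcc_of_le hεR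
    have hLne : ∀ r ∈ Icc ε R', L r ≠ 0 := fun r hr =>
      (hLneg r (hsub hr).1 (hsub hr).2).ne
    have hLc : ContinuousOn L (Icc ε R') :=
      ContinuousOn.log (continuous_id.div_const R).continuousOn
        (fun r hr => div_ne_zero (hsub hr).1.ne' hR.ne')
    have hgc : ContinuousOn g (Icc ε R') := (hLc.inv₀ hLne).neg
    have hgdc : ContinuousOn gd (Icc ε R') :=
      continuousOn_const.div (continuousOn_id.mul (hLc.pow 2))
        (fun r hr => mul_ne_zero (hsub hr).1.ne' (pow_ne_zero 2 (hLne r hr)))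
    -- derivative of f^2 * g
    have hderiv : ∀ r ∈ uIcc ε R',
        HasDerivAt (fun t => f t ^ 2 * g t)
          (2 * f r * deriv f r * g r + f r ^ 2 * gd r) r := by
      intro r hr
      rw [huIcc] at hr
      obtain ⟨hr0, hrR⟩ := hsub hr
      have hLd : HasDerivAt L r⁻¹ r := by
        have h1 : HasDerivAt (fun t : ℝ => t / R) (1/R) r := (hasDerivAt_id r).div_const R
        have h2 := (Real.hasDerivAt_log (div_ne_zero hr0.ne' hR.ne')).comp r h1
        refine h2.congr_deriv ?_
        field_simp
      have hgA : HasDerivAt g (gd r) r := by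
        have := (hLd.inv (hLne r hr)).neg
        refine this.congr_deriv ?_
        simp only [hgddef]
        field_simp
      have hfd : HasDerivAt f (deriv f r) r := (hf.differentiable (by simp) r).hasDerivAt
      have := (hfd.pow 2).mul hgA
      refine this.congr_deriv ?_
      rw [Pi.pow_apply]
      ring
    have hi1 : IntervalIntegrable (fun r => 2 * f r * deriv f r * g r) volume ε R' := by
      apply ContinuousOn.intervalIntegrable
      rw [huIcc]
      exact ((continuous_const.mul hfc).mul hf'c).continuousOn.mul hgc
    have hi2 : IntervalIntegrable (fun r => f r ^ 2 * gd r) volume ε R' := by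
      apply ContinuousOn.intervalIntegrable
      rw [huIcc]
      exact (hfc.pow 2).continuousOn.mul hgdc
    have hiZ : IntervalIntegrable Z volume ε R' := hZc.intervalIntegrable ε R'
    have eq1 : (∫ r in ε..R', (2 * f r * deriv f r * g r + f r ^ 2 * gd r))
        = f R' ^ 2 * g R' - f ε ^ 2 * g ε :=
      intervalIntegral.integral_eq_sub_of_hasDerivAt hderiv (hi1.add hi2)
    rw [intervalIntegral.integral_add hi1 hi2, hz R' le_rfl] at eq1
    set X : ℝ := ∫ r in ε..R', f r ^ 2 * gd r with hX
    set Y : ℝ := ∫ r in ε..R', 2 * f r * deriv f r * g r with hY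
    have hgε : 0 ≤ g ε := by
      have := hLneg ε hε (hεR'.trans hlt)
      simp only [hgdef]
      rw [neg_nonneg]
      exact inv_nonpos.2 this.le
    have hmono : -Y ≤ 1/2 * X + 2 * ∫ r in ε..R', Z r := by
      have hpt : ∀ r ∈ Icc ε R',
          -(2 * f r * deriv f r * g r) ≤ 1/2 * (f r ^2 * gd r) + 2 * Z r := by
        intro r hr
        obtain ⟨hr0, hrR⟩ := hsub hr
        exact ptwise (f r) (deriv f r) r (L r) hr0 (hLneg r hr0 hrR)
      have := intervalIntegral.integral_mono_on hεR hi1.neg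
        ((hi2.const_mul (1/2)).add (hiZ.const_mul 2)) hpt
      simp only [Pi.neg_apply] at this
      rw [intervalIntegral.integral_neg, intervalIntegral.integral_add
        (hi2.const_mul (1/2)) (hiZ.const_mul 2), intervalIntegral.integral_const_mul,
        intervalIntegral.integral_const_mul] at this
      exact this
    have hZJ : (∫ r in ε..R', Z r) ≤ J := by
      rw [intervalIntegral.integral_of_le hεR]
      exact setIntegral_mono_set hJint hJnn (Ioc_subset_Ioc hε.le le_rfl).eventuallyLE
    have hfg : 0 ≤ f ε ^ 2 * g ε := mul_nonneg (sq_nonneg _) hgε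
    linarith
  -- Step B: pass to the limit via monotone sets
  have hqm : Measurable fun r => ENNReal.ofReal (f r ^ 2 / (r * L r ^ 2)) := by
    apply ENNReal.measurable_ofReal.comp
    apply Measurable.div (hfc.measurable.pow_const 2)
    exact measurable_id.mul (((Real.measurable_log.comp
      (measurable_id.div_const R)).pow_const 2))
  set s : ℕ → Set ℝ := fun n => Ioc (R'/(n+2)) R' with hs
  have hsmono : Monotone s := by
    intro m n hmn
    apply Ioc_subset_Ioc _ le_rfl
    apply div_le_div_of_nonneg_left h0.le (by positivity)
    have : (m:ℝ) ≤ n := Nat.cast_le.2 hmn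
    linarith
  have hsunion : ⋃ n, s n = Ioc 0 R' := by
    ext r
    simp only [mem_iUnion, mem_Ioc, hs]
    constructor
    · rintro ⟨n, h1, h2⟩
      exact ⟨lt_trans (by positivity) h1, h2⟩
    · rintro ⟨h1, h2⟩
      obtain ⟨n, hn⟩ := exists_nat_gt (R'/r)
      refine ⟨n, ?_, h2⟩
      rw [div_lt_iff₀ (by positivity)]
      rw [div_lt_iff₀ h1] at hn
      nlinarith
  have hstep : ∀ n, ∫⁻ r in s n, ENNReal.ofReal (f r ^ 2 / (r * L r ^ 2))
      ≤ ENNReal.ofReal (4 * J) := by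
    intro n
    set ε : ℝ := R'/(n+2) with hε
    have hε0 : 0 < ε := by positivity
    have hεR' : ε < R' := by
      rw [hε, div_lt_iff₀ (by positivity)]
      nlinarith
    have hqeq : ∀ r ∈ Ioc ε R', f r ^ 2 / (r * L r ^ 2) = f r ^ 2 * gd r := by
      intro r hr
      rw [hgddef]
      rw [mul_one_div]
    have hsubI : Icc ε R' ⊆ {r | 0 < r ∧ r < R} := fun r hr =>
      ⟨hε0.trans_le hr.1, hr.2.trans_lt hlt⟩
    have hLcI : ContinuousOn L (Icc ε R') :=
      ContinuousOn.log (continuous_id.div_const R).continuousOn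
        (fun r hr => div_ne_zero (hsubI hr).1.ne' hR.ne')
    have hLneI : ∀ r ∈ Icc ε R', L r ≠ 0 := fun r hr =>
      (hLneg r (hsubI hr).1 (hsubI hr).2).ne
    have hgdcI : ContinuousOn gd (Icc ε R') :=
      continuousOn_const.div (continuousOn_id.mul (hLcI.pow 2))
        (fun r hr => mul_ne_zero (hsubI hr).1.ne' (pow_ne_zero 2 (hLneI r hr)))
    have hint : IntegrableOn (fun r => f r ^ 2 * gd r) (Ioc ε R') := by
      apply ((((hfc.pow 2).continuousOn).mul hgdcI).integrableOn_compact isCompact_Icc).mono_set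
      exact Ioc_subset_Icc_self
    have hnn : 0 ≤ᵐ[volume.restrict (Ioc ε R')] fun r => f r ^ 2 * gd r := by
      filter_upwards [ae_restrict_mem measurableSet_Ioc] with r hr
      have hr0 : 0 < r := hε0.trans hr.1
      have : 0 ≤ gd r := by
        rw [hgddef]
        positivity
      positivity
    calc ∫⁻ r in s n, ENNReal.ofReal (f r ^ 2 / (r * L r ^ 2))
        = ∫⁻ r in Ioc ε R', ENNReal.ofReal (f r ^ 2 * gd r) := by
          apply setLIntegral_congr_fun measurableSet_Ioc
          intro r hr
          beta_reduce
          rw [hqeq r hr]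
      _ = ENNReal.ofReal (∫ r in Ioc ε R', f r ^ 2 * gd r) :=
          (ofReal_integral_eq_lintegral_ofReal hint hnn).symm
      _ ≤ ENNReal.ofReal (4 * J) := by
          apply ENNReal.ofReal_le_ofReal
          rw [← intervalIntegral.integral_of_le hεR'.le]
          exact stepA ε hε0 hεR'
  -- combine
  have hunion : ∫⁻ r in Ioc 0 R', ENNReal.ofReal (f r ^ 2 / (r * L r ^ 2))
      ≤ ENNReal.ofReal (4 * J) := by
    rw [← hsunion]
    have hmeas : ∀ n, MeasurableSet (s n) := fun n => measurableSet_Ioc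
    rw [← withDensity_apply _ (MeasurableSet.iUnion hmeas)]
    have := Directed.measure_iUnion (μ := volume.withDensity
      (fun r => ENNReal.ofReal (f r ^ 2 / (r * L r ^ 2)))) (hsmono.directed_le)
    rw [this]
    apply iSup_le
    intro n
    rw [withDensity_apply _ (hmeas n)]
    exact hstep n
  -- rewrite RHS
  have hRHS : (4 : ENNReal) * ∫⁻ r in Ioc 0 R', ENNReal.ofReal (Z r)
      = ENNReal.ofReal (4 * J) := by
    rw [← ofReal_integral_eq_lintegral_ofReal hJint hJnn, ← hJdef,
      ENNReal.ofReal_mul (by norm_num)]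
    norm_num
  calc ∫⁻ r in Ioc 0 R', ENNReal.ofReal (f r ^ 2 / (r * Real.log (r/R) ^ 2))
      ≤ ENNReal.ofReal (4 * J) := hunion
    _ = 4 * ∫⁻ r in Ioc 0 R', ENNReal.ofReal (r * (deriv f r)^2) := hRHS.symm


open scoped Real in
/-- The modified Hardy inequality (3.2) in the disk `D(0, R) ⊆ ℝ²`. -/
theorem stmt5 (R : ℝ) (hR : 0 < R) (u : EuclideanSpace ℝ (Fin 2) → ℝ)
    (hu : ContDiff ℝ (⊤ : ℕ∞) u) (hsupp : HasCompactSupport u)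
    (hsub : tsupport u ⊆ Metric.ball (0 : EuclideanSpace ℝ (Fin 2)) R) :
    (∫ x : EuclideanSpace ℝ (Fin 2), ‖gradient u x‖ ^ 2) ≥
      (1 / 4) * ∫ x : EuclideanSpace ℝ (Fin 2),
        u x ^ 2 / (‖x‖ ^ 2 * Real.log (‖x‖ / R) ^ 2) := by
  classical
  obtain ⟨R', hR'mem, hsubR'⟩ : ∃ R' ∈ Ioo (0:ℝ) R, tsupport u ⊆ Metric.ball 0 R' :=
    exists_pos_lt_subset_ball hR (isClosed_tsupport u) hsub
  obtain ⟨h0R', hR'R⟩ := hR'mem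
  have huz : ∀ x : EuclideanSpace ℝ (Fin 2), R' ≤ ‖x‖ → u x = 0 := by
    intro x hx
    apply image_eq_zero_of_notMem_tsupport
    intro hmem
    have := hsubR' hmem
    rw [Metric.mem_ball, dist_zero_right] at this
    linarith
  have hgradc : Continuous (gradient u) := by
    have : gradient u = fun x =>
        (InnerProductSpace.toDual ℝ (EuclideanSpace ℝ (Fin 2))).symm (fderiv ℝ u x) := rfl
    rw [this]
    exact (InnerProductSpace.toDual ℝ _).symm.continuous.comp (hu.continuous_fderiv (by simp))
  have hgradnorm : ∀ x, ‖gradient u x‖ = ‖fderiv ℝ u x‖ := fun x =>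
    (InnerProductSpace.toDual ℝ (EuclideanSpace ℝ (Fin 2))).symm.norm_map _
  -- the measure preserving map T : ℝ × ℝ → E
  set T : ℝ × ℝ → EuclideanSpace ℝ (Fin 2) := fun p =>
    (MeasurableEquiv.toLp 2 (Fin 2 → ℝ)) (MeasurableEquiv.finTwoArrow.symm p) with hTdef
  have hT : MeasurePreserving T volume volume :=
    (PiLp.volume_preserving_toLp (Fin 2)).comp
      ((volume_preserving_finTwoArrow ℝ).symm _)
  have hTmeas : Measurable T :=
    ((MeasurableEquiv.toLp 2 (Fin 2 → ℝ)).measurable).comp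
      (MeasurableEquiv.finTwoArrow.symm.measurable)
  -- the unit vector
  set v : ℝ → EuclideanSpace ℝ (Fin 2) := fun θ =>
    (WithLp.equiv 2 (Fin 2 → ℝ)).symm ![Real.cos θ, Real.sin θ] with hvdef
  have hTv : ∀ r θ : ℝ, T (polarCoord.symm (r, θ)) = r • v θ := by
    intro r θ
    have h : polarCoord.symm (r, θ) = (r * Real.cos θ, r * Real.sin θ) := rfl
    rw [hTdef, hvdef, h]
    ext i
    fin_cases i <;>
      simp [MeasurableEquiv.coe_toLp, MeasurableEquiv.finTwoArrow, PiLp.smul_apply,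
        smul_eq_mul, MeasurableEquiv.piFinTwo, WithLp.equiv_symm_apply]
  have hnormv : ∀ θ, ‖v θ‖ = 1 := by
    intro θ
    rw [hvdef]
    simp only
    rw [EuclideanSpace.norm_eq, Fin.sum_univ_two]
    simp only [WithLp.equiv_symm_apply, PiLp.toLp_apply, Matrix.cons_val_zero, Matrix.cons_val_one,
      Matrix.head_cons, Real.norm_eq_abs, sq_abs]
    rw [show Real.cos θ ^ 2 + Real.sin θ ^ 2 = 1 from Real.cos_sq_add_sin_sq θ]
    exact Real.sqrt_one
  have hnormsmul : ∀ (r θ : ℝ), 0 ≤ r → ‖r • v θ‖ = r := by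
    intro r θ hr
    rw [norm_smul, hnormv, mul_one, Real.norm_eq_abs, abs_of_nonneg hr]
  -- radial functions
  have hfθsm : ∀ θ, ContDiff ℝ (⊤ : ℕ∞) (fun r : ℝ => u (r • v θ)) := fun θ =>
    hu.comp (contDiff_id.smul contDiff_const)
  have hfθd : ∀ θ r : ℝ, HasDerivAt (fun r : ℝ => u (r • v θ))
      ((fderiv ℝ u (r • v θ)) (v θ)) r := by
    intro θ r
    have h1 : HasDerivAt (fun r : ℝ => r • v θ) (v θ) r := by
      simpa using (hasDerivAt_id r).smul_const (v θ)
    exact ((hu.differentiable (by simp)) (r • v θ)).hasFDerivAt.comp_hasDerivAt r h1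
  have hbound : ∀ θ r : ℝ, (deriv (fun r : ℝ => u (r • v θ)) r) ^ 2
      ≤ ‖gradient u (r • v θ)‖ ^ 2 := by
    intro θ r
    rw [(hfθd θ r).deriv]
    have h1 : |(fderiv ℝ u (r • v θ)) (v θ)| ≤ ‖gradient u (r • v θ)‖ := by
      rw [hgradnorm]
      calc |(fderiv ℝ u (r • v θ)) (v θ)| = ‖(fderiv ℝ u (r • v θ)) (v θ)‖ := rfl
        _ ≤ ‖fderiv ℝ u (r • v θ)‖ * ‖v θ‖ := (fderiv ℝ u (r • v θ)).le_opNorm _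
        _ = ‖fderiv ℝ u (r • v θ)‖ := by rw [hnormv, mul_one]
    calc (fderiv ℝ u (r • v θ)) (v θ) ^ 2 = |(fderiv ℝ u (r • v θ)) (v θ)| ^ 2 := (sq_abs _).symm
      _ ≤ ‖gradient u (r • v θ)‖ ^ 2 := by
          apply pow_le_pow_left₀ (abs_nonneg _) h1
  -- measurable integrands
  set G₁ : EuclideanSpace ℝ (Fin 2) → ENNReal := fun x =>
    ENNReal.ofReal (‖gradient u x‖ ^ 2) with hG₁def
  set G₂ : EuclideanSpace ℝ (Fin 2) → ENNReal := fun x =>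
    ENNReal.ofReal (u x ^ 2 / (‖x‖ ^ 2 * Real.log (‖x‖ / R) ^ 2)) with hG₂def
  have hq2m : Measurable fun x : EuclideanSpace ℝ (Fin 2) =>
      u x ^ 2 / (‖x‖ ^ 2 * Real.log (‖x‖ / R) ^ 2) := by
    apply Measurable.div ((hu.continuous.pow 2).measurable)
    exact ((continuous_norm.pow 2).measurable).mul
      ((Real.measurable_log.comp (continuous_norm.measurable.div_const R)).pow_const 2)
  have hG₁m : Measurable G₁ := ENNReal.measurable_ofReal.comp (hgradc.norm.pow 2).measurable
  have hG₂m : Measurable G₂ := ENNReal.measurable_ofReal.comp hq2m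
  -- transfer a lintegral over E to iterated polar form
  have transfer : ∀ G : EuclideanSpace ℝ (Fin 2) → ENNReal, Measurable G →
      ∫⁻ x, G x = ∫⁻ θ in Ioo (-π) π, ∫⁻ r in Ioi (0:ℝ),
        ENNReal.ofReal r * G (T (polarCoord.symm (r, θ))) := by
    intro G hG
    rw [← hT.lintegral_comp hG, ← lintegral_comp_polarCoord_symm' (fun p => G (T p))]
    have htarget : polarCoord.target = Ioi (0:ℝ) ×ˢ Ioo (-π) π := rfl
    rw [htarget]
    have hmeasH : Measurable fun p : ℝ × ℝ =>
        ENNReal.ofReal p.1 * G (T (polarCoord.symm p)) := by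
      apply (ENNReal.measurable_ofReal.comp measurable_fst).mul
      apply hG.comp (hTmeas.comp _)
      exact (measurable_fst.mul (Real.measurable_cos.comp measurable_snd)).prodMk
        (measurable_fst.mul (Real.measurable_sin.comp measurable_snd))
    rw [Measure.volume_eq_prod, ← Measure.prod_restrict,
      lintegral_prod_symm _ hmeasH.aemeasurable]
  -- per θ inequality
  have perθ : ∀ θ : ℝ,
      (∫⁻ r in Ioi (0:ℝ), ENNReal.ofReal r * G₂ (T (polarCoord.symm (r, θ))))
        ≤ 4 * ∫⁻ r in Ioi (0:ℝ), ENNReal.ofReal r * G₁ (T (polarCoord.symm (r, θ))) := by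
    intro θ
    set f : ℝ → ℝ := fun r => u (r • v θ) with hfdef
    have hzf : ∀ r, R' ≤ r → f r = 0 := by
      intro r hr
      apply huz
      rw [hnormsmul r θ (h0R'.le.trans hr)]
      exact hr
    have e₂ : ∀ r ∈ Ioi (0:ℝ), ENNReal.ofReal r * G₂ (T (polarCoord.symm (r, θ)))
        = ENNReal.ofReal (f r ^ 2 / (r * Real.log (r / R) ^ 2)) := by
      intro r hr
      have hr0 : (0:ℝ) < r := hr
      rw [hTv, hG₂def]
      simp only
      rw [hnormsmul r θ hr0.le, ← ENNReal.ofReal_mul hr0.le]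
      congr 1
      rcases eq_or_ne (Real.log (r / R)) 0 with hc | hc
      · simp [hc]
      · field_simp
        ring
    have e₁ : ∀ r ∈ Ioi (0:ℝ), ENNReal.ofReal r * G₁ (T (polarCoord.symm (r, θ)))
        = ENNReal.ofReal (r * ‖gradient u (r • v θ)‖ ^ 2) := by
      intro r hr
      have hr0 : (0:ℝ) < r := hr
      rw [hTv, hG₁def, ← ENNReal.ofReal_mul hr0.le]
    calc (∫⁻ r in Ioi (0:ℝ), ENNReal.ofReal r * G₂ (T (polarCoord.symm (r, θ))))
        = ∫⁻ r in Ioi (0:ℝ), ENNReal.ofReal (f r ^ 2 / (r * Real.log (r / R) ^ 2)) := by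
          apply setLIntegral_congr_fun measurableSet_Ioi
          intro r hr
          exact e₂ r hr
      _ = ∫⁻ r in Ioc 0 R', ENNReal.ofReal (f r ^ 2 / (r * Real.log (r / R) ^ 2)) := by
          rw [← Ioc_union_Ioi_eq_Ioi h0R'.le, lintegral_union measurableSet_Ioi
            (Ioc_disjoint_Ioi le_rfl)]
          have hzero : ∫⁻ r in Ioi R',
              ENNReal.ofReal (f r ^ 2 / (r * Real.log (r / R) ^ 2)) = 0 := by
            rw [← lintegral_zero (μ := volume.restrict (Ioi R'))]
            apply setLIntegral_congr_fun measurableSet_Ioi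
            intro r hr
            beta_reduce
            rw [hzf r (le_of_lt hr)]
            simp
          rw [hzero, add_zero]
      _ ≤ 4 * ∫⁻ r in Ioc 0 R', ENNReal.ofReal (r * (deriv f r) ^ 2) :=
          key1d R R' h0R' hR'R f (hfθsm θ) hzf
      _ ≤ 4 * ∫⁻ r in Ioc 0 R', ENNReal.ofReal (r * ‖gradient u (r • v θ)‖ ^ 2) := by
          apply mul_le_mul_right
          apply lintegral_mono_ae
          filter_upwards [ae_restrict_mem measurableSet_Ioc] with r hr
          apply ENNReal.ofReal_le_ofReal
          exact mul_le_mul_of_nonneg_left (hbound θ r) hr.1.le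
      _ ≤ 4 * ∫⁻ r in Ioi (0:ℝ), ENNReal.ofReal (r * ‖gradient u (r • v θ)‖ ^ 2) := by
          apply mul_le_mul_right
          exact lintegral_mono' (Measure.restrict_mono Ioc_subset_Ioi_self le_rfl) le_rfl
      _ = 4 * ∫⁻ r in Ioi (0:ℝ), ENNReal.ofReal r * G₁ (T (polarCoord.symm (r, θ))) := by
          congr 1
          apply setLIntegral_congr_fun measurableSet_Ioi
          intro r hr
          exact (e₁ r hr).symm
  -- main lintegral inequality
  have main : ∫⁻ x, G₂ x ≤ 4 * ∫⁻ x, G₁ x := by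
    rw [transfer G₂ hG₂m, transfer G₁ hG₁m]
    calc (∫⁻ θ in Ioo (-π) π, ∫⁻ r in Ioi (0:ℝ),
          ENNReal.ofReal r * G₂ (T (polarCoord.symm (r, θ))))
        ≤ ∫⁻ θ in Ioo (-π) π, 4 * ∫⁻ r in Ioi (0:ℝ),
          ENNReal.ofReal r * G₁ (T (polarCoord.symm (r, θ))) := lintegral_mono fun θ => perθ θ
      _ = 4 * ∫⁻ θ in Ioo (-π) π, ∫⁻ r in Ioi (0:ℝ),
          ENNReal.ofReal r * G₁ (T (polarCoord.symm (r, θ))) :=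
          lintegral_const_mul' 4 _ (by norm_num)
  -- back to Bochner integrals
  have hgradint : Integrable (fun x : EuclideanSpace ℝ (Fin 2) => ‖gradient u x‖ ^ 2) := by
    apply Continuous.integrable_of_hasCompactSupport (hgradc.norm.pow 2)
    have h1 : HasCompactSupport (fderiv ℝ u) := hsupp.fderiv ℝ
    have h2 : HasCompactSupport (gradient u) := by
      have : gradient u = fun x =>
          (InnerProductSpace.toDual ℝ (EuclideanSpace ℝ (Fin 2))).symm (fderiv ℝ u x) := rfl
      rw [this]
      exact h1.comp_left (by simp)
    rw [sq]
    exact (h2.norm).mul_left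
  have hLHS : (∫ x : EuclideanSpace ℝ (Fin 2), ‖gradient u x‖ ^ 2) = (∫⁻ x, G₁ x).toReal := by
    rw [integral_eq_lintegral_of_nonneg_ae]
    · filter_upwards with x
      positivity
    · exact (hgradc.norm.pow 2).aestronglyMeasurable
  have hRHS : (∫ x : EuclideanSpace ℝ (Fin 2), u x ^ 2 / (‖x‖ ^ 2 * Real.log (‖x‖ / R) ^ 2))
      = (∫⁻ x, G₂ x).toReal := by
    rw [integral_eq_lintegral_of_nonneg_ae]
    · filter_upwards with x
      positivity
    · exact hq2m.aestronglyMeasurable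
  rw [ge_iff_le, hLHS, hRHS]
  have hfin : ∫⁻ x, G₁ x ≠ ⊤ := hgradint.lintegral_lt_top.ne
  have h4fin : (4:ENNReal) * ∫⁻ x, G₁ x ≠ ⊤ := ENNReal.mul_ne_top (by norm_num) hfin
  have h2 : (∫⁻ x, G₂ x).toReal ≤ 4 * (∫⁻ x, G₁ x).toReal := by
    have := ENNReal.toReal_mono h4fin main
    rwa [ENNReal.toReal_mul, show ((4:ENNReal)).toReal = 4 by norm_num] at this
  linarith [ENNReal.toReal_nonneg (a := ∫⁻ x, G₁ x)]
end

section
/- Let d ≥ 3, let C > 0, s ∈ (0,2), and let v : (0,∞) → ℝ be continuous with v(r) ≥ -C·r^{-s} for r ∈ (0,1] and v(r) ≥ -C for r ≥ 1. Set V(x) = v(‖x‖). Then there exists a constant C' ≥ 0 such that for every smooth function u : ℝ^d → ℝ with compact support contained in ℝ^d \ {0}, ∫_{ℝ^d} ‖∇u(x)‖² dx + ∫_{ℝ^d} V(x)·u(x)² dx ≥ -C' · ∫_{ℝ^d} u(x)² dx. -/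
open MeasureTheory

open Metric Set


variable {d : ℕ}

lemma auxContInt (K : Set (EuclideanSpace ℝ (Fin d))) (hK : IsCompact K)
    (g : EuclideanSpace ℝ (Fin d) → ℝ)
    (hg : ContinuousOn g {0}ᶜ) {ε : ℝ} (hε : 0 < ε)
    (h0 : ∀ x ∈ ball (0 : EuclideanSpace ℝ (Fin d)) ε, g x = 0)
    (hs : ∀ x ∉ K, g x = 0) :
    Integrable g := by
  have hcont : Continuous g := by
    rw [continuous_iff_continuousAt]
    intro x
    by_cases hx : x ∈ ball (0 : EuclideanSpace ℝ (Fin d)) ε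
    · have hev : g =ᶠ[nhds x] fun _ => (0 : ℝ) := by
        filter_upwards [isOpen_ball.mem_nhds hx] with y hy using h0 y hy
      exact (continuousAt_congr hev).2 continuousAt_const
    · have hx0 : x ≠ 0 := by rintro rfl; exact hx (mem_ball_self hε)
      exact hg.continuousAt (isOpen_compl_singleton.mem_nhds hx0)
  have hsupp : HasCompactSupport g := by
    apply HasCompactSupport.of_support_subset_isCompact hK
    intro x hx
    by_contra hxK
    exact hx (hs x hxK)
  exact hcont.integrable_of_hasCompactSupport hsupp

lemma fderiv_G_eval (u : EuclideanSpace ℝ (Fin d) → ℝ) (hu : ContDiff ℝ (⊤ : ℕ∞) u)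
    (i : Fin d) (x : EuclideanSpace ℝ (Fin d)) (hx : x ≠ 0) :
    HasFDerivAt (fun y : EuclideanSpace ℝ (Fin d) => u y ^ 2 * (‖y‖ ^ 2)⁻¹ * y i)
      (fderiv ℝ (fun y : EuclideanSpace ℝ (Fin d) => u y ^ 2 * (‖y‖ ^ 2)⁻¹ * y i) x) x ∧
    fderiv ℝ (fun y : EuclideanSpace ℝ (Fin d) => u y ^ 2 * (‖y‖ ^ 2)⁻¹ * y i) x
      (EuclideanSpace.single i 1)
    = (2 * u x * (‖x‖^2)⁻¹) * (x i * fderiv ℝ u x (EuclideanSpace.single i 1))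
      + (-2 * u x ^ 2 * ((‖x‖^2)⁻¹)^2) * (x i)^2 + u x ^2 * (‖x‖^2)⁻¹ := by
  have hN : HasFDerivAt (fun y : EuclideanSpace ℝ (Fin d) => ‖y‖ ^ 2)
      (2 • (innerSL ℝ x)) x := by
    simpa using (hasFDerivAt_id x).norm_sq
  have hNx : ‖x‖ ^ 2 ≠ 0 := pow_ne_zero _ (norm_ne_zero_iff.2 hx)
  have hρ : HasFDerivAt (fun y : EuclideanSpace ℝ (Fin d) => (‖y‖ ^ 2)⁻¹)
      ((-ContinuousLinearMap.mulLeftRight ℝ ℝ (‖x‖^2)⁻¹ (‖x‖^2)⁻¹).comp (2 • (innerSL ℝ x))) x :=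
    (hasFDerivAt_inv' hNx).comp x hN
  have hU := (hu.differentiable (by simp) x).hasFDerivAt
  have hu2 : HasFDerivAt (fun y => u y ^ 2)
      ((u x • fderiv ℝ u x) + (u x • fderiv ℝ u x)) x := by
    have h := hU.mul hU; simp only [pow_two]; exact h
  have hcoord : HasFDerivAt (fun y : EuclideanSpace ℝ (Fin d) => y i)
      (EuclideanSpace.proj (𝕜 := ℝ) i) x := (EuclideanSpace.proj (𝕜 := ℝ) i).hasFDerivAt
  have hG := (hu2.mul hρ).mul hcoord
  refine ⟨hG.fderiv ▸ hG, ?_⟩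
  rw [show (fun y : EuclideanSpace ℝ (Fin d) => u y ^ 2 * (‖y‖ ^ 2)⁻¹ * y i) =
    ((fun y => u y ^ 2) * fun y => (‖y‖ ^ 2)⁻¹) * fun y => y i from rfl, hG.fderiv]
  simp [ContinuousLinearMap.mulLeftRight, EuclideanSpace.inner_single_right, real_inner_comm]
  ring_nf

set_option maxHeartbeats 2000000 in
theorem hardy (hd : 3 ≤ d) (u : EuclideanSpace ℝ (Fin d) → ℝ)
    (hu : ContDiff ℝ (⊤ : ℕ∞) u) (hcs : HasCompactSupport u)
    (h0 : tsupport u ⊆ {(0 : EuclideanSpace ℝ (Fin d))}ᶜ) :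
    (∫ x : EuclideanSpace ℝ (Fin d), u x ^ 2 * (‖x‖ ^ 2)⁻¹) ≤
      4 / ((d : ℝ) - 2) ^ 2 * ∫ x : EuclideanSpace ℝ (Fin d), ‖gradient u x‖ ^ 2 := by
  classical
  -- basic setup
  have h0' : (0 : EuclideanSpace ℝ (Fin d)) ∉ tsupport u := fun h => (h0 h) rfl
  obtain ⟨ε, hε, hball⟩ : ∃ ε > 0, ball (0 : EuclideanSpace ℝ (Fin d)) ε ⊆ (tsupport u)ᶜ := by
    rcases Metric.mem_nhds_iff.1 ((isOpen_compl_iff.2 (isClosed_tsupport u)).mem_nhds h0') with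
      ⟨ε, hε, h⟩
    exact ⟨ε, hε, h⟩
  have huev : ∀ x ∉ tsupport u, u =ᶠ[nhds x] fun _ => (0:ℝ) := by
    intro x hx
    filter_upwards [(isOpen_compl_iff.2 (isClosed_tsupport u)).mem_nhds hx] with y hy
    exact image_eq_zero_of_notMem_tsupport hy
  have hfud : Differentiable ℝ u := hu.differentiable (by simp)
  have hfu0 : ∀ x ∉ tsupport u, fderiv ℝ u x = 0 := by
    intro x hx
    rw [(huev x hx).fderiv_eq]
    exact fderiv_const_apply 0
  have hu0 : ∀ x ∉ tsupport u, u x = 0 := fun x hx => image_eq_zero_of_notMem_tsupport hx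
  -- the vector field components
  set G : Fin d → EuclideanSpace ℝ (Fin d) → ℝ := fun i y => u y ^ 2 * (‖y‖ ^ 2)⁻¹ * y i with hGdef
  have hGev : ∀ i, ∀ x ∉ tsupport u, G i =ᶠ[nhds x] fun _ => (0:ℝ) := by
    intro i x hx
    filter_upwards [huev x hx] with y hy
    simp [hGdef, hy]
  have hGdiff : ∀ i, Differentiable ℝ (G i) := by
    intro i x
    by_cases hx : x ∈ tsupport u
    · exact ((fderiv_G_eval u hu i x (fun h => (h0 hx) h)).1).differentiableAt
    · exact (differentiableAt_const (0:ℝ)).congr_of_eventuallyEq (hGev i x hx)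
  have hGf0 : ∀ i, ∀ x ∉ tsupport u, fderiv ℝ (G i) x = 0 := by
    intro i x hx
    rw [(hGev i x hx).fderiv_eq]
    exact fderiv_const_apply 0
  -- continuity of fderiv u applied
  have hcfd : Continuous fun x : EuclideanSpace ℝ (Fin d) => fderiv ℝ u x := hu.continuous_fderiv (by simp)
  have hcfd1 : ∀ y : EuclideanSpace ℝ (Fin d), Continuous fun x : EuclideanSpace ℝ (Fin d) => fderiv ℝ u x y :=
    fun y => hcfd.clm_apply continuous_const
  have hcfdx : Continuous fun x : EuclideanSpace ℝ (Fin d) => fderiv ℝ u x x := hcfd.clm_apply continuous_id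
  have hcinv : ContinuousOn (fun x : EuclideanSpace ℝ (Fin d) => (‖x‖ ^ 2)⁻¹) {0}ᶜ := by
    apply ContinuousOn.inv₀ ((continuous_norm.pow 2).continuousOn)
    intro x hx
    exact pow_ne_zero _ (norm_ne_zero_iff.2 hx)
  -- integrability statements
  have Ig : ∀ i, Integrable fun x : EuclideanSpace ℝ (Fin d) => fderiv ℝ (G i) x (EuclideanSpace.single i 1) := by
    intro i
    refine auxContInt (tsupport u) hcs _ ?_ hε ?_ ?_
    · refine ContinuousOn.congr (f := fun x : EuclideanSpace ℝ (Fin d) =>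
        (2 * u x * (‖x‖^2)⁻¹) * (x i * fderiv ℝ u x (EuclideanSpace.single i 1))
        + (-2 * u x ^ 2 * ((‖x‖^2)⁻¹)^2) * (x i)^2 + u x ^2 * (‖x‖^2)⁻¹)
        (ContinuousOn.add (ContinuousOn.add
          ((((continuous_const.mul hu.continuous).continuousOn.mul hcinv).mul
            (((PiLp.continuous_apply (p := 2) (β := fun _ : Fin d => ℝ) i).continuousOn).mul (hcfd1 _).continuousOn)))
          (((continuous_const.mul (hu.continuous.pow 2)).continuousOn.mul
            (hcinv.pow 2)).mul ((PiLp.continuous_apply (p := 2) (β := fun _ : Fin d => ℝ) i).pow 2).continuousOn))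
          ((hu.continuous.pow 2).continuousOn.mul hcinv))
        ?_
      intro x hx
      exact (fderiv_G_eval u hu i x hx).2
    · intro x hx
      rw [hGf0 i x (fun h => (hball hx) h)]
      rfl
    · intro x hx
      rw [hGf0 i x hx]
      rfl
  have IG : ∀ i, Integrable (G i) := by
    intro i
    refine auxContInt (tsupport u) hcs _ ?_ hε ?_ ?_
    · exact ((hu.continuous.pow 2).continuousOn.mul hcinv).mul (PiLp.continuous_apply (p := 2) (β := fun _ : Fin d => ℝ) i).continuousOn
    · intro x hx
      simp [hGdef, hu0 x (fun h => (hball hx) h)]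
    · intro x hx
      simp [hGdef, hu0 x hx]
  -- integration by parts: each directional derivative integrates to zero
  have ibp : ∀ i, (∫ x : EuclideanSpace ℝ (Fin d),
      fderiv ℝ (G i) x (EuclideanSpace.single i 1)) = 0 := by
    intro i
    have h := integral_mul_fderiv_eq_neg_fderiv_mul_of_integrable
      (f := G i) (g := fun _ : EuclideanSpace ℝ (Fin d) => (1:ℝ))
      (v := EuclideanSpace.single i 1)
      (by simpa using Ig i)
      (by simpa [fderiv_const] using (integrable_zero (EuclideanSpace ℝ (Fin d)) ℝ volume))
      (by simpa using IG i) (fun x _ => hGdiff i x) (fun x _ => differentiableAt_const (1:ℝ))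
    simp [fderiv_const] at h
    linarith
  -- the divergence identity
  have hsum : ∀ x : EuclideanSpace ℝ (Fin d),
      (∑ i, fderiv ℝ (G i) x (EuclideanSpace.single i 1)) =
      2 * u x * fderiv ℝ u x x * (‖x‖^2)⁻¹ + ((d:ℝ) - 2) * (u x ^2 * (‖x‖^2)⁻¹) := by
    intro x
    by_cases hx : x ∈ tsupport u
    · have hx0 : x ≠ 0 := fun h => (h0 hx) h
      have hNx : ‖x‖^2 ≠ 0 := pow_ne_zero _ (norm_ne_zero_iff.2 hx0)
      have e1 : ∑ i, x i * fderiv ℝ u x (EuclideanSpace.single i 1) = fderiv ℝ u x x := by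
        have hb : (∑ i, x i • EuclideanSpace.single i (1:ℝ)) = x := by
          simpa [EuclideanSpace.basisFun_apply, EuclideanSpace.basisFun_repr] using
            (EuclideanSpace.basisFun (Fin d) ℝ).sum_repr x
        calc ∑ i, x i * fderiv ℝ u x (EuclideanSpace.single i 1)
            = ∑ i, fderiv ℝ u x (x i • EuclideanSpace.single i 1) := by
              simp [smul_eq_mul]
          _ = fderiv ℝ u x (∑ i, x i • EuclideanSpace.single i 1) := (map_sum _ _ _).symm
          _ = fderiv ℝ u x x := by rw [hb]
      have e2 : ∑ i, (x i)^2 = ‖x‖^2 := by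
        rw [EuclideanSpace.norm_eq, Real.sq_sqrt (by positivity)]
        simp [sq_abs]
      calc ∑ i, fderiv ℝ (G i) x (EuclideanSpace.single i 1)
          = ∑ i, ((2 * u x * (‖x‖^2)⁻¹) * (x i * fderiv ℝ u x (EuclideanSpace.single i 1))
            + (-2 * u x ^ 2 * ((‖x‖^2)⁻¹)^2) * (x i)^2 + u x ^2 * (‖x‖^2)⁻¹) :=
            Finset.sum_congr rfl fun i _ => (fderiv_G_eval u hu i x hx0).2
        _ = (2 * u x * (‖x‖^2)⁻¹) * (∑ i, x i * fderiv ℝ u x (EuclideanSpace.single i 1))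
            + (-2 * u x ^ 2 * ((‖x‖^2)⁻¹)^2) * (∑ i, (x i)^2)
            + (d:ℝ) * (u x ^2 * (‖x‖^2)⁻¹) := by
            rw [Finset.sum_add_distrib, Finset.sum_add_distrib, ← Finset.mul_sum,
              ← Finset.mul_sum, Finset.sum_const, Finset.card_fin, nsmul_eq_mul]
        _ = 2 * u x * fderiv ℝ u x x * (‖x‖^2)⁻¹ + ((d:ℝ) - 2) * (u x ^2 * (‖x‖^2)⁻¹) := by
            rw [e1, e2]
            field_simp
            ring
    · have h1 : ∀ i : Fin d, fderiv ℝ (G i) x (EuclideanSpace.single i 1) = 0 := by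
        intro i; rw [hGf0 i x hx]; rfl
      simp [h1, hu0 x hx, hfu0 x hx]
  -- remaining integrability
  have I1 : Integrable (fun x : EuclideanSpace ℝ (Fin d) => u x^2 * (‖x‖^2)⁻¹) :=
    auxContInt (tsupport u) hcs _ ((hu.continuous.pow 2).continuousOn.mul hcinv) hε
      (fun x hx => by simp [hu0 x (hball hx)]) (fun x hx => by simp [hu0 x hx])
  have hgradc : Continuous fun x : EuclideanSpace ℝ (Fin d) => gradient u x :=
    (LinearIsometryEquiv.continuous _).comp hcfd
  have hgrad0 : ∀ x ∉ tsupport u, gradient u x = 0 := by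
    intro x hx
    show (InnerProductSpace.toDual ℝ _).symm (fderiv ℝ u x) = 0
    rw [hfu0 x hx, map_zero]
  have I2 : Integrable (fun x : EuclideanSpace ℝ (Fin d) => ‖gradient u x‖^2) :=
    auxContInt (tsupport u) hcs _ ((hgradc.norm.pow 2).continuousOn) hε
      (fun x hx => by rw [hgrad0 x (hball hx)]; simp) (fun x hx => by rw [hgrad0 x hx]; simp)
  have If1 : Integrable (fun x : EuclideanSpace ℝ (Fin d) =>
      2 * u x * fderiv ℝ u x x * (‖x‖^2)⁻¹) :=
    auxContInt (tsupport u) hcs _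
      (((continuous_const.mul hu.continuous).mul hcfdx).continuousOn.mul hcinv) hε
      (fun x hx => by simp [hu0 x (hball hx)]) (fun x hx => by simp [hu0 x hx])
  -- total integral identity
  have htot : (∫ x : EuclideanSpace ℝ (Fin d),
      (2 * u x * fderiv ℝ u x x * (‖x‖^2)⁻¹ + ((d:ℝ) - 2) * (u x ^2 * (‖x‖^2)⁻¹))) = 0 := by
    rw [integral_congr_ae (Filter.Eventually.of_forall fun x => (hsum x).symm),
      integral_finset_sum _ (fun i _ => Ig i)]
    simp [ibp]
  rw [integral_add If1 (I1.const_mul _), integral_const_mul] at htot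
  set A := ∫ x : EuclideanSpace ℝ (Fin d), u x^2 * (‖x‖^2)⁻¹ with hA
  set B := ∫ x : EuclideanSpace ℝ (Fin d), ‖gradient u x‖^2 with hB
  have hA0 : 0 ≤ A := integral_nonneg fun x => by positivity
  have hB0 : 0 ≤ B := integral_nonneg fun x => by positivity
  have hd2 : (1:ℝ) ≤ (d:ℝ) - 2 := by
    have : (3:ℝ) ≤ (d:ℝ) := by exact_mod_cast hd
    linarith
  set t : ℝ := ((d:ℝ) - 2)/2 with htdef
  have ht : 0 < t := by rw [htdef]; linarith
  -- pointwise AM-GM bound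
  have hpt : ∀ x : EuclideanSpace ℝ (Fin d),
      -(2 * u x * fderiv ℝ u x x * (‖x‖^2)⁻¹) ≤
      t * (u x^2 * (‖x‖^2)⁻¹) + t⁻¹ * ‖gradient u x‖^2 := by
    intro x
    by_cases hx0 : x = 0
    · subst hx0
      simp
      positivity
    · have hn : (0:ℝ) < ‖x‖ := norm_pos_iff.2 hx0
      have habs : |fderiv ℝ u x x| ≤ ‖gradient u x‖ * ‖x‖ := by
        have h1 : ‖gradient u x‖ = ‖fderiv ℝ u x‖ :=
          LinearIsometryEquiv.norm_map (InnerProductSpace.toDual ℝ _).symm _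
        calc |fderiv ℝ u x x| = ‖fderiv ℝ u x x‖ := (Real.norm_eq_abs _).symm
          _ ≤ ‖fderiv ℝ u x‖ * ‖x‖ := (fderiv ℝ u x).le_opNorm x
          _ = ‖gradient u x‖ * ‖x‖ := by rw [h1]
      set a := u x with ha
      set D := fderiv ℝ u x x with hD
      set g := ‖gradient u x‖ with hg
      set n := ‖x‖ with hnn
      have hg0 : 0 ≤ g := norm_nonneg _
      set m := n⁻¹ with hm
      have hm0 : 0 < m := inv_pos.2 hn
      have hnm : n * m = 1 := mul_inv_cancel₀ hn.ne'
      have h2 : (n^2)⁻¹ = m^2 := by rw [hm, inv_pow]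
      rw [h2]
      have hstep : -(2*a*D*m^2) ≤ 2*(|a| * m)*g := by
        calc -(2*a*D*m^2) ≤ |2*a*D*m^2| := neg_le_abs _
          _ = 2 * |a| * |D| * m^2 := by
              rw [abs_mul, abs_mul, abs_mul]
              simp [abs_of_nonneg hm0.le, abs_of_nonneg, sq_abs]
          _ ≤ 2 * |a| * (g*n) * m^2 := by gcongr
          _ = 2*(|a| * m)*g*(n*m) := by ring
          _ = 2*(|a| * m)*g := by rw [hnm, mul_one]
      have hkey : 2*(|a| * m)*g ≤ t*(|a| * m)^2 + t⁻¹*g^2 := by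
        rw [← sub_nonneg]
        have hq : t*(|a| * m)^2 + t⁻¹*g^2 - 2*(|a| * m)*g = (t*(|a| * m) - g)^2 / t := by
          field_simp
          ring
        rw [hq]
        positivity
      have hfin : t*(|a| * m)^2 = t*(a^2*m^2) := by
        rw [mul_pow, sq_abs]
      linarith
  have hmono : (∫ x : EuclideanSpace ℝ (Fin d), -(2 * u x * fderiv ℝ u x x * (‖x‖^2)⁻¹)) ≤
      ∫ x : EuclideanSpace ℝ (Fin d),
        (t * (u x^2 * (‖x‖^2)⁻¹) + t⁻¹ * ‖gradient u x‖^2) :=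
    integral_mono If1.neg ((I1.const_mul t).add (I2.const_mul t⁻¹)) hpt
  rw [integral_neg, integral_add (I1.const_mul t) (I2.const_mul t⁻¹),
    integral_const_mul, integral_const_mul] at hmono
  have h5 : ((d:ℝ)-2)*A ≤ t*A + t⁻¹*B := by linarith
  have htinv : t⁻¹ = 2/((d:ℝ)-2) := by rw [htdef, inv_div]
  have hD2pos : (0:ℝ) < (d:ℝ)-2 := by linarith
  have h6 : ((d:ℝ)-2)/2*A ≤ 2/((d:ℝ)-2)*B := by
    rw [htdef] at h5
    rw [htinv] at h5
    linarith
  calc A = (2/((d:ℝ)-2))*(((d:ℝ)-2)/2*A) := by field_simp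
    _ ≤ (2/((d:ℝ)-2))*(2/((d:ℝ)-2)*B) := by
        apply mul_le_mul_of_nonneg_left h6 (by positivity)
    _ = 4/((d:ℝ)-2)^2*B := by
        field_simp
        ring

set_option maxHeartbeats 1000000 in
/-- Lower semiboundedness of the quadratic form of `H_V = -Δ + V` for a radial
potential with a Coulomb-like singularity at the origin. -/
theorem stmt6 (d : ℕ) (hd : 3 ≤ d) (C : ℝ) (hC : 0 < C) (s : ℝ)
    (hs : s ∈ Set.Ioo (0 : ℝ) 2)
    (v : ℝ → ℝ) (hv : ContinuousOn v (Set.Ioi 0))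
    (hv1 : ∀ r ∈ Set.Ioc (0 : ℝ) 1, v r ≥ -C * r ^ (-s))
    (hv2 : ∀ r ≥ (1 : ℝ), v r ≥ -C) :
    ∃ C' ≥ (0 : ℝ), ∀ u : EuclideanSpace ℝ (Fin d) → ℝ,
      ContDiff ℝ (⊤ : ℕ∞) u → HasCompactSupport u →
      tsupport u ⊆ {(0 : EuclideanSpace ℝ (Fin d))}ᶜ →
      (∫ x : EuclideanSpace ℝ (Fin d), ‖gradient u x‖ ^ 2) +
        (∫ x : EuclideanSpace ℝ (Fin d), v ‖x‖ * u x ^ 2) ≥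
        -C' * ∫ x : EuclideanSpace ℝ (Fin d), u x ^ 2 := by
  obtain ⟨hs0, hs2⟩ := hs
  have hd2 : (1:ℝ) ≤ (d:ℝ) - 2 := by
    have : (3:ℝ) ≤ (d:ℝ) := by exact_mod_cast hd
    linarith
  have hD2pos : (0:ℝ) < (d:ℝ) - 2 := by linarith
  set ε : ℝ := ((d:ℝ)-2)^2/(4*C) with hεdef
  have hεpos : 0 < ε := by positivity
  set M : ℝ := ε ^ (-(s/(2-s))) with hMdef
  have hM0 : 0 ≤ M := Real.rpow_nonneg hεpos.le _
  refine ⟨C*M + C, by positivity, ?_⟩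
  intro u hu hcs h0
  have h2s : (0:ℝ) < 2 - s := by linarith
  -- pointwise bound on r^{-s}
  have hrs : ∀ r : ℝ, 0 < r → r ^ (-s) ≤ ε * (r^2)⁻¹ + M := by
    intro r hr
    have hr2 : (0:ℝ) ≤ (r^2)⁻¹ := by positivity
    have hneg2 : r ^ (-2:ℝ) = (r^2)⁻¹ := by
      rw [show ((-2:ℝ)) = -((2:ℕ):ℝ) by norm_num, Real.rpow_neg hr.le, Real.rpow_natCast]
    rcases le_or_gt r (ε^((2-s)⁻¹)) with h|h
    · have h1 : r^(2-s) ≤ ε := by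
        calc r^(2-s) ≤ (ε^((2-s)⁻¹))^(2-s) :=
              Real.rpow_le_rpow hr.le h (by linarith)
          _ = ε := Real.rpow_inv_rpow hεpos.le (by linarith)
      have h2 : r ^ (-s) = r^(2-s) * r^(-2:ℝ) := by
        rw [show (-s) = (2-s) + (-2:ℝ) by ring, Real.rpow_add hr]
      rw [h2, hneg2]
      have := mul_le_mul_of_nonneg_right h1 hr2
      linarith
    · have h1 : r ^ (-s) ≤ (ε^((2-s)⁻¹)) ^ (-s) :=
        Real.rpow_le_rpow_of_nonpos (Real.rpow_pos_of_pos hεpos _) h.le (by linarith)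
      have h2 : (ε^((2-s)⁻¹)) ^ (-s) = M := by
        rw [hMdef, ← Real.rpow_mul hεpos.le]
        congr 1
        field_simp
      have : (0:ℝ) ≤ ε * (r^2)⁻¹ := by positivity
      linarith [h1, h2 ▸ h1]
  -- pointwise lower bound for the potential term
  have hpt : ∀ x : EuclideanSpace ℝ (Fin d),
      (-(C*ε)) * (u x^2 * (‖x‖^2)⁻¹) + (-(C*M+C)) * u x^2 ≤ v ‖x‖ * u x ^2 := by
    intro x
    by_cases hx0 : x = 0
    · have hu00 : u x = 0 := by
        apply image_eq_zero_of_notMem_tsupport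
        intro h
        exact (h0 h) (by simp [hx0])
      simp [hu00]
    · have hr : (0:ℝ) < ‖x‖ := norm_pos_iff.2 hx0
      have hvlow : -C * ‖x‖ ^ (-s) - C ≤ v ‖x‖ := by
        rcases le_or_gt ‖x‖ 1 with h|h
        · have := hv1 ‖x‖ ⟨hr, h⟩
          linarith
        · have h1 := hv2 ‖x‖ h.le
          have h2 : (0:ℝ) ≤ ‖x‖ ^ (-s) := Real.rpow_nonneg hr.le _
          nlinarith
      have hvb : -(C*ε) * (‖x‖^2)⁻¹ - (C*M+C) ≤ v ‖x‖ := by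
        have h1 := hrs ‖x‖ hr
        nlinarith
      have := mul_le_mul_of_nonneg_right hvb (sq_nonneg (u x))
      nlinarith [this]
  -- integrability
  have h0' : (0 : EuclideanSpace ℝ (Fin d)) ∉ tsupport u := fun h => (h0 h) rfl
  obtain ⟨δ, hδ, hball⟩ : ∃ δ > 0, ball (0 : EuclideanSpace ℝ (Fin d)) δ ⊆ (tsupport u)ᶜ := by
    rcases Metric.mem_nhds_iff.1 ((isOpen_compl_iff.2 (isClosed_tsupport u)).mem_nhds h0') with
      ⟨δ, hδ, h⟩
    exact ⟨δ, hδ, h⟩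
  have hu0 : ∀ x ∉ tsupport u, u x = 0 := fun x hx => image_eq_zero_of_notMem_tsupport hx
  have hcinv : ContinuousOn (fun x : EuclideanSpace ℝ (Fin d) => (‖x‖ ^ 2)⁻¹) {0}ᶜ := by
    apply ContinuousOn.inv₀ ((continuous_norm.pow 2).continuousOn)
    intro x hx
    exact pow_ne_zero _ (norm_ne_zero_iff.2 hx)
  have I1 : Integrable (fun x : EuclideanSpace ℝ (Fin d) => u x^2 * (‖x‖^2)⁻¹) :=
    auxContInt (tsupport u) hcs _ ((hu.continuous.pow 2).continuousOn.mul hcinv) hδ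
      (fun x hx => by simp [hu0 x (hball hx)]) (fun x hx => by simp [hu0 x hx])
  have Iu2 : Integrable (fun x : EuclideanSpace ℝ (Fin d) => u x^2) :=
    auxContInt (tsupport u) hcs _ ((hu.continuous.pow 2)).continuousOn hδ
      (fun x hx => by simp [hu0 x (hball hx)]) (fun x hx => by simp [hu0 x hx])
  have IV : Integrable (fun x : EuclideanSpace ℝ (Fin d) => v ‖x‖ * u x^2) := by
    refine auxContInt (tsupport u) hcs _ ?_ hδ ?_ ?_
    · refine ContinuousOn.mul ?_ (hu.continuous.pow 2).continuousOn
      exact hv.comp continuous_norm.continuousOn fun x hx => norm_pos_iff.2 hx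
    · intro x hx
      simp [hu0 x (hball hx)]
    · intro x hx
      simp [hu0 x hx]
  -- compare integrals
  have hmono : (∫ x : EuclideanSpace ℝ (Fin d),
      ((-(C*ε)) * (u x^2 * (‖x‖^2)⁻¹) + (-(C*M+C)) * u x^2)) ≤
      ∫ x : EuclideanSpace ℝ (Fin d), v ‖x‖ * u x^2 :=
    integral_mono ((I1.const_mul _).add (Iu2.const_mul _)) IV hpt
  rw [integral_add (I1.const_mul _) (Iu2.const_mul _), integral_const_mul,
    integral_const_mul] at hmono
  have hhardy := hardy hd u hu hcs h0
  set A := ∫ x : EuclideanSpace ℝ (Fin d), u x^2 * (‖x‖^2)⁻¹ with hA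
  set B := ∫ x : EuclideanSpace ℝ (Fin d), ‖gradient u x‖^2 with hB
  have hB0 : 0 ≤ B := integral_nonneg fun x => by positivity
  have hkey : C*ε*A ≤ B := by
    calc C*ε*A ≤ C*ε*(4/((d:ℝ)-2)^2*B) := by
          apply mul_le_mul_of_nonneg_left hhardy (by positivity)
      _ = B := by
          rw [hεdef]
          field_simp
  have hgoal : -(C*M+C) * (∫ x : EuclideanSpace ℝ (Fin d), u x^2) - B ≤
      ∫ x : EuclideanSpace ℝ (Fin d), v ‖x‖ * u x^2 := by
    linarith
  linarith
end

section
/- Let d ≥ 2 and ℓ ∈ ℕ. The real vector space of polynomials P in d real variables that are homogeneous of degree ℓ and harmonic (i.e., Σ_{i=1}^{d} ∂²P/∂x_i² = 0) has finite dimension equal to Λ_{ℓ,d} := C(ℓ+d-1, d-1) - C(ℓ+d-3, d-1), where C(n,k) denotes the binomial coefficient (with C(n,k) = 0 when n < k). -/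
/-!
For the Fischer inner product `⟨p, q⟩ = ∑_α α! p_α q_α`, which is positive definite, the
Laplacian is adjoint to multiplication by `r² = ∑ xᵢ²`. So `Δ (r² q) = 0` gives
`⟨r² q, r² q⟩ = ⟨Δ (r² q), q⟩ = 0`, hence `q = 0`: `Δ ∘ r²` is an injective, hence bijective,
endomorphism of the homogeneous polynomials of degree `ℓ - 2`, and `Δ` maps degree `ℓ` onto
degree `ℓ - 2`. Rank–nullity and the count `C(n + d - 1, d - 1)` of monomials of degree `n`
give the dimension; for `ℓ ≤ 1` every homogeneous polynomial is harmonic.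
-/

open MvPolynomial

noncomputable def polyLaplacian (d : ℕ) :
    MvPolynomial (Fin d) ℝ →ₗ[ℝ] MvPolynomial (Fin d) ℝ :=
  ∑ i : Fin d, (pderiv i).toLinearMap ∘ₗ (pderiv i).toLinearMap

noncomputable def harmonicHomogeneous (d ℓ : ℕ) : Submodule ℝ (MvPolynomial (Fin d) ℝ) :=
  homogeneousSubmodule (Fin d) ℝ ℓ ⊓ LinearMap.ker (polyLaplacian d)

namespace MvPolynomial

variable {σ R : Type*}

instance [CommSemiring R] [Finite σ] (n : ℕ) : Module.Finite R (homogeneousSubmodule σ R n) :=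
  Module.Finite.iff_fg.mpr (homogeneousSubmodule_fg σ R n)

theorem finrank_homogeneousSubmodule [Fintype σ] [DecidableEq σ] [CommRing R]
    [StrongRankCondition R] (n : ℕ) :
    Module.finrank R (homogeneousSubmodule σ R n) = (Fintype.card σ + n - 1).choose n := by
  have hdeg : {a : σ →₀ ℕ | a.degree = n} =
      ((Finset.univ : Finset σ).finsuppAntidiag n : Set (σ →₀ ℕ)) := by
    ext a
    simp [Finsupp.degree_eq_sum]
  rw [homogeneousSubmodule_eq_finsupp_supported, hdeg, ← restrictSupport,
    Module.finrank_eq_card_basis (basisRestrictSupport R _)]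
  simp [Finset.card_finsuppAntidiag_nat_eq_choose]

theorem finrank_homogeneousSubmodule_fin {d : ℕ} (hd : d ≠ 0) (n : ℕ) :
    Module.finrank ℝ (homogeneousSubmodule (Fin d) ℝ n) = (n + d - 1).choose (d - 1) := by
  obtain ⟨e, rfl⟩ : ∃ e, d = e + 1 := ⟨d - 1, by omega⟩
  rw [finrank_homogeneousSubmodule, Fintype.card_fin, show e + 1 + n - 1 = n + e by omega,
    show n + (e + 1) - 1 = n + e by omega, Nat.add_sub_cancel, Nat.choose_symm_add]

lemma sum_support_eq_of_subset {M : Type*} [CommSemiring R] [AddCommMonoid M]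
    {p : MvPolynomial σ R} {s : Finset (σ →₀ ℕ)} (h : p.support ⊆ s)
    (f : (σ →₀ ℕ) → R → M) (hf : ∀ a, f a 0 = 0) :
    ∑ a ∈ p.support, f a (coeff a p) = ∑ a ∈ s, f a (coeff a p) :=
  Finset.sum_subset h fun a _ ha => by rw [notMem_support_iff.mp ha, hf]

lemma coeff_X_pow_mul' [CommSemiring R] [DecidableEq σ] (a : σ →₀ ℕ) (i : σ) (n : ℕ)
    (p : MvPolynomial σ R) :
    coeff a (X i ^ n * p) = if n ≤ a i then coeff (a - Finsupp.single i n) p else 0 := by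
  simp only [X_pow_eq_monomial, coeff_monomial_mul', Finsupp.single_le_iff, one_mul]

lemma pderiv_pderiv_monomial [CommSemiring R] [DecidableEq σ] (i : σ) (a : σ →₀ ℕ) (c : R) :
    pderiv i (pderiv i (monomial a c)) =
      monomial (a - Finsupp.single i 2) (c * (a i).descFactorial 2) := by
  rw [pderiv_monomial, pderiv_monomial, tsub_tsub, ← Finsupp.single_add, one_add_one_eq_two,
    Finsupp.tsub_apply, Finsupp.single_eq_same, Nat.descFactorial_succ, Nat.descFactorial_one]
  push_cast
  rw [mul_assoc, mul_comm (a i : R)]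

section Fischer

variable [Fintype σ]

noncomputable def factorialWeight (a : σ →₀ ℕ) : ℝ := ∏ i, ((a i).factorial : ℝ)

lemma factorialWeight_pos (a : σ →₀ ℕ) : 0 < factorialWeight a :=
  Finset.prod_pos fun i _ => by exact_mod_cast (a i).factorial_pos

lemma factorialWeight_tsub_single_mul_descFactorial [DecidableEq σ] {a : σ →₀ ℕ} {i : σ}
    {k : ℕ} (h : k ≤ a i) :
    factorialWeight (a - Finsupp.single i k) * (a i).descFactorial k = factorialWeight a := by
  unfold factorialWeight
  rw [Fintype.prod_eq_mul_prod_compl i, Fintype.prod_eq_mul_prod_compl i, mul_right_comm]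
  congr 1
  · simp only [Finsupp.tsub_apply, Finsupp.single_eq_same]
    exact_mod_cast Nat.factorial_mul_descFactorial h
  · refine Finset.prod_congr rfl fun j hj => ?_
    rw [Finsupp.tsub_apply, Finsupp.single_eq_of_ne (by simpa using hj), tsub_zero]

noncomputable def fischerForm : LinearMap.BilinForm ℝ (MvPolynomial σ ℝ) :=
  LinearMap.mk₂ ℝ (fun p q => ∑ a ∈ p.support, factorialWeight a * coeff a p * coeff a q)
    (fun p p' q => by
      classical
      have hsum : ∀ r : MvPolynomial σ ℝ, r.support ⊆ p.support ∪ p'.support →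
          ∑ a ∈ r.support, factorialWeight a * coeff a r * coeff a q =
            ∑ a ∈ p.support ∪ p'.support, factorialWeight a * coeff a r * coeff a q :=
        fun r hr => sum_support_eq_of_subset hr (fun a c => factorialWeight a * c * coeff a q)
          (fun a => by simp only [mul_zero, zero_mul])
      rw [hsum _ support_add, hsum p Finset.subset_union_left, hsum p' Finset.subset_union_right,
        ← Finset.sum_add_distrib]
      simp only [coeff_add, mul_add, add_mul])
    (fun c p q => by
      rw [sum_support_eq_of_subset support_smul (fun a c' => factorialWeight a * c' * coeff a q)
        (fun a => by simp only [mul_zero, zero_mul]), smul_eq_mul, Finset.mul_sum]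
      simp only [coeff_smul, smul_eq_mul]
      exact Finset.sum_congr rfl fun a _ => by ring)
    (fun p q q' => by simp only [coeff_add, mul_add, Finset.sum_add_distrib])
    (fun c p q => by
      simp only [coeff_smul, smul_eq_mul, Finset.mul_sum]
      exact Finset.sum_congr rfl fun a _ => by ring)

lemma fischerForm_apply (p q : MvPolynomial σ ℝ) :
    fischerForm p q = ∑ a ∈ p.support, factorialWeight a * coeff a p * coeff a q := rfl

lemma fischerForm_monomial_left (a : σ →₀ ℕ) (c : ℝ) (q : MvPolynomial σ ℝ) :
    fischerForm (monomial a c) q = factorialWeight a * c * coeff a q := by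
  classical
  rw [fischerForm_apply, sum_support_eq_of_subset support_monomial_subset
    (fun b c' => factorialWeight b * c' * coeff b q) (fun b => by simp only [mul_zero, zero_mul]),
    Finset.sum_singleton, coeff_monomial, if_pos rfl]

lemma fischerForm_self_pos {p : MvPolynomial σ ℝ} (hp : p ≠ 0) : 0 < fischerForm p p := by
  rw [fischerForm_apply]
  refine Finset.sum_pos (fun a ha => ?_) (support_nonempty.mpr hp)
  rw [mul_assoc]
  exact mul_pos (factorialWeight_pos a) (mul_self_pos.mpr (mem_support_iff.mp ha))

end Fischer

end MvPolynomial

section Laplacian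

variable {d : ℕ}

noncomputable def radiusSq (d : ℕ) : MvPolynomial (Fin d) ℝ := ∑ i, X i ^ 2

lemma isHomogeneous_radiusSq : (radiusSq d).IsHomogeneous 2 :=
  IsHomogeneous.sum _ _ _ fun i _ => isHomogeneous_X_pow i 2

lemma radiusSq_ne_zero (hd : d ≠ 0) : radiusSq d ≠ 0 := fun h =>
  hd (by simpa [radiusSq] using congrArg (eval fun _ => (1 : ℝ)) h)

lemma polyLaplacian_apply (p : MvPolynomial (Fin d) ℝ) :
    polyLaplacian d p = ∑ i, pderiv i (pderiv i p) := by
  simp [polyLaplacian, LinearMap.sum_apply]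

theorem fischerForm_polyLaplacian (p q : MvPolynomial (Fin d) ℝ) :
    fischerForm (polyLaplacian d p) q = fischerForm p (radiusSq d * q) := by
  induction p using MvPolynomial.induction_on' with
  | add p₁ p₂ h₁ h₂ => simp only [map_add, LinearMap.add_apply, h₁, h₂]
  | monomial a c =>
    simp only [polyLaplacian_apply, pderiv_pderiv_monomial, map_sum, LinearMap.sum_apply,
      fischerForm_monomial_left, radiusSq, Finset.sum_mul, coeff_X_pow_mul']
    refine Finset.sum_congr rfl fun i _ => ?_
    split_ifs with h
    · rw [← factorialWeight_tsub_single_mul_descFactorial h]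
      ring
    · rw [Nat.descFactorial_eq_zero_iff_lt.mpr (not_le.mp h)]
      simp only [Nat.cast_zero, mul_zero, zero_mul]

lemma eq_zero_of_polyLaplacian_radiusSq_mul (hd : d ≠ 0) {q : MvPolynomial (Fin d) ℝ}
    (h : polyLaplacian d (radiusSq d * q) = 0) : q = 0 := by
  have hself : fischerForm (radiusSq d * q) (radiusSq d * q) = 0 := by
    rw [← fischerForm_polyLaplacian, h, map_zero, LinearMap.zero_apply]
  have hmul : radiusSq d * q = 0 := by
    by_contra hne
    exact (fischerForm_self_pos hne).ne' hself
  exact (mul_eq_zero.mp hmul).resolve_left (radiusSq_ne_zero hd)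

lemma MvPolynomial.IsHomogeneous.polyLaplacian {p : MvPolynomial (Fin d) ℝ} {n : ℕ}
    (h : p.IsHomogeneous (n + 2)) : (polyLaplacian d p).IsHomogeneous n := by
  rw [polyLaplacian_apply]
  exact IsHomogeneous.sum _ _ _ fun i _ => h.pderiv.pderiv

lemma polyLaplacian_eq_zero_of_isHomogeneous {p : MvPolynomial (Fin d) ℝ} {n : ℕ}
    (h : p.IsHomogeneous n) (hn : n ≤ 1) : polyLaplacian d p = 0 := by
  rw [polyLaplacian_apply]
  refine Finset.sum_eq_zero fun i _ => ?_
  have hconst : (pderiv i p).IsHomogeneous 0 := by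
    simpa [Nat.sub_eq_zero_of_le hn] using h.pderiv
  rw [← totalDegree_zero_iff_isHomogeneous, totalDegree_eq_zero_iff_eq_C] at hconst
  rw [hconst, pderiv_C]

noncomputable def homogeneousLaplacian (d m : ℕ) :
    homogeneousSubmodule (Fin d) ℝ (m + 2) →ₗ[ℝ] homogeneousSubmodule (Fin d) ℝ m :=
  (polyLaplacian d).restrict fun p hp =>
    (mem_homogeneousSubmodule m _).mpr ((mem_homogeneousSubmodule (m + 2) p).mp hp).polyLaplacian

noncomputable def mulRadiusSq (d m : ℕ) :
    homogeneousSubmodule (Fin d) ℝ m →ₗ[ℝ] homogeneousSubmodule (Fin d) ℝ (m + 2) :=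
  (LinearMap.mulLeft ℝ (radiusSq d)).restrict fun q hq => by
    rw [mem_homogeneousSubmodule, add_comm]
    exact isHomogeneous_radiusSq.mul ((mem_homogeneousSubmodule m q).mp hq)

lemma homogeneousLaplacian_surjective (hd : d ≠ 0) (m : ℕ) :
    Function.Surjective (homogeneousLaplacian d m) := by
  have hinj : Function.Injective (homogeneousLaplacian d m ∘ₗ mulRadiusSq d m) := by
    rw [← LinearMap.ker_eq_bot, LinearMap.ker_eq_bot']
    exact fun q hq =>
      Subtype.ext (eq_zero_of_polyLaplacian_radiusSq_mul hd (congrArg Subtype.val hq))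
  have hsurj := LinearMap.injective_iff_surjective.mp hinj
  rw [LinearMap.coe_comp] at hsurj
  exact hsurj.of_comp

lemma harmonicHomogeneous_eq_map_ker (d m : ℕ) :
    harmonicHomogeneous d (m + 2) =
      (LinearMap.ker (homogeneousLaplacian d m)).map
        (homogeneousSubmodule (Fin d) ℝ (m + 2)).subtype := by
  rw [homogeneousLaplacian, LinearMap.ker_restrict, Submodule.map_comap_subtype]
  rfl

lemma finrank_harmonicHomogeneous_add_two (hd : d ≠ 0) (m : ℕ) :
    Module.finrank ℝ (harmonicHomogeneous d (m + 2)) =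
      Module.finrank ℝ (homogeneousSubmodule (Fin d) ℝ (m + 2)) -
        Module.finrank ℝ (homogeneousSubmodule (Fin d) ℝ m) := by
  have hrank := LinearMap.finrank_range_add_finrank_ker (homogeneousLaplacian d m)
  rw [LinearMap.range_eq_top.mpr (homogeneousLaplacian_surjective hd m), finrank_top] at hrank
  rw [harmonicHomogeneous_eq_map_ker, Submodule.finrank_map_subtype_eq]
  omega

lemma harmonicHomogeneous_eq_of_le_one {ℓ : ℕ} (hℓ : ℓ ≤ 1) :
    harmonicHomogeneous d ℓ = homogeneousSubmodule (Fin d) ℝ ℓ :=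
  inf_eq_left.mpr fun _ hp => polyLaplacian_eq_zero_of_isHomogeneous hp hℓ

end Laplacian

/-- Proposition 3.2: the space of homogeneous harmonic polynomials of degree `ℓ` in
`d ≥ 2` variables has dimension `Λ_{ℓ,d} = C(ℓ+d-1, d-1) - C(ℓ+d-3, d-1)`. -/
theorem stmt7 (d ℓ : ℕ) (hd : 2 ≤ d) :
    Module.Finite ℝ (harmonicHomogeneous d ℓ) ∧
      Module.finrank ℝ (harmonicHomogeneous d ℓ) =
        Nat.choose (ℓ + d - 1) (d - 1) - Nat.choose (ℓ + d - 3) (d - 1) := by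
  refine ⟨by unfold harmonicHomogeneous; infer_instance, ?_⟩
  rcases Nat.lt_or_ge ℓ 2 with hℓ | hℓ
  · rw [harmonicHomogeneous_eq_of_le_one (by omega), finrank_homogeneousSubmodule_fin (by omega),
      Nat.choose_eq_zero_of_lt (show ℓ + d - 3 < d - 1 by omega), Nat.sub_zero]
  · obtain ⟨m, rfl⟩ := Nat.exists_eq_add_of_le' hℓ
    rw [finrank_harmonicHomogeneous_add_two (by omega), finrank_homogeneousSubmodule_fin (by omega),
      finrank_homogeneousSubmodule_fin (by omega), show m + 2 + d - 3 = m + d - 1 by omega]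
end

section
/- Let d ≥ 2, and let v : (0,∞) → ℝ be continuous with: (i) there exist C > 0 and s ∈ (0,2) such that v(r) ≥ -C·r^{-s} for r ∈ (0,1], and (ii) v(r) → +∞ as r → +∞. For ℓ ∈ ℕ define m_ℓ := inf_{r > 0} (v(r) + ℓ(ℓ+d-2)/r²). Then m_ℓ > -∞ for every ℓ ≥ 1, and the map ℓ ↦ m_ℓ is strictly increasing on {ℓ ∈ ℕ : ℓ ≥ 1}. -/
/-!
For `c > 0` the function `r ↦ v r + c / r ^ 2` is continuous on `(0, ∞)` and tends to `+∞` at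
both ends: at `0` because `c / r ^ 2 - C r ^ (-s) = r ^ (-2) (c - C r ^ (2 - s))` with `s < 2`,
at `∞` because `v` does. Hence it attains its infimum. If `r` is the minimiser for `ℓ'`, then
`m_ℓ ≤ v r + ℓ(ℓ+d-2)/r² < v r + ℓ'(ℓ'+d-2)/r² = m_ℓ'`, since `ℓ(ℓ+d-2)` is positive and strictly
increasing for `ℓ ≥ 1`, `d ≥ 2`.
-/

open Set Filter Topology

theorem ContinuousOn.exists_isMinOn_Ioi {α β : Type*} [ConditionallyCompleteLinearOrder α]
    [TopologicalSpace α] [OrderTopology α] [NoMaxOrder α] [DenselyOrdered α]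
    [LinearOrder β] [TopologicalSpace β] [ClosedIicTopology β]
    {f : α → β} {a : α} (hf : ContinuousOn f (Ioi a))
    (h₀ : Tendsto f (𝓝[>] a) atTop) (h₁ : Tendsto f atTop atTop) :
    ∃ x ∈ Ioi a, IsMinOn f (Ioi a) x := by
  obtain ⟨b, hab⟩ := exists_gt a
  obtain ⟨u, hau, hu⟩ := mem_nhdsGT_iff_exists_Ioc_subset.1 (h₀.eventually_ge_atTop (f b))
  obtain ⟨R, hR⟩ := (h₁.eventually_ge_atTop (f b)).exists_forall_of_atTop
  have hK : Icc (min u b) (max R b) ⊆ Ioi a := fun x hx => (lt_min hau hab).trans_le hx.1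
  have hbK : b ∈ Icc (min u b) (max R b) := ⟨min_le_right _ _, le_max_right _ _⟩
  obtain ⟨x, hxK, hx⟩ := isCompact_Icc.exists_isMinOn ⟨b, hbK⟩ (hf.mono hK)
  refine ⟨x, hK hxK, fun y (hy : a < y) => ?_⟩
  rcases lt_or_ge y (min u b) with hyu | hyu
  · exact (hx hbK).trans (hu ⟨hy, hyu.le.trans (min_le_left _ _)⟩)
  rcases le_or_gt y (max R b) with hyR | hyR
  · exact hx ⟨hyu, hyR⟩
  · exact (hx hbK).trans (hR y ((le_max_left _ _).trans hyR.le))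

theorem tendsto_add_div_sq_nhdsGT_zero_atTop {v : ℝ → ℝ} {C s c : ℝ} (hs : s < 2)
    (hlow : ∀ᶠ r in 𝓝[>] 0, -C * r ^ (-s) ≤ v r) (hc : 0 < c) :
    Tendsto (fun r => v r + c / r ^ 2) (𝓝[>] 0) atTop := by
  have hinv : Tendsto (fun r : ℝ => (r ^ 2)⁻¹) (𝓝[>] 0) atTop := by
    simpa only [Function.comp_def, inv_pow] using
      (tendsto_pow_atTop two_ne_zero).comp (tendsto_inv_nhdsGT_zero (𝕜 := ℝ))
  have hpow : Tendsto (fun r : ℝ => c - C * r ^ (2 - s)) (𝓝[>] 0) (𝓝 c) := by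
    have := (Real.continuousAt_rpow_const 0 (2 - s) (Or.inr (by linarith))).tendsto
      |>.const_mul C |>.const_sub c
    simpa [Real.zero_rpow (by linarith : (2:ℝ) - s ≠ 0)] using this.mono_left nhdsWithin_le_nhds
  refine tendsto_atTop_mono' _ ?_ (hinv.atTop_mul_pos hc hpow)
  filter_upwards [hlow, self_mem_nhdsWithin] with r hr (hr0 : 0 < r)
  have : (r ^ 2)⁻¹ * (c - C * r ^ (2 - s)) = c / r ^ 2 + -C * r ^ (-s) := by
    rw [Real.rpow_sub hr0, Real.rpow_two, Real.rpow_neg hr0.le]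
    field_simp
    ring
  linarith

theorem IsMinOn.csInf_image_eq {α β : Type*} [ConditionallyCompleteLattice β] {f : α → β}
    {s : Set α} {x : α} (h : IsMinOn f s x) (hx : x ∈ s) : sInf (f '' s) = f x :=
  (h.isGLB hx).csInf_eq ⟨_, mem_image_of_mem f hx⟩

theorem exists_isMinOn_add_div_sq {v : ℝ → ℝ} {C s c : ℝ} (hv : ContinuousOn v (Ioi 0))
    (hs : s < 2) (hlow : ∀ᶠ r in 𝓝[>] 0, -C * r ^ (-s) ≤ v r)
    (hinf : Tendsto v atTop atTop) (hc : 0 < c) :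
    ∃ r ∈ Ioi 0, IsMinOn (fun r => v r + c / r ^ 2) (Ioi 0) r :=
  (hv.add (continuousOn_const.div (continuousOn_pow 2) fun _ hr => pow_ne_zero 2 hr.ne'))
    |>.exists_isMinOn_Ioi
    (tendsto_add_div_sq_nhdsGT_zero_atTop hs hlow hc)
    (hinf.atTop_add_nonneg fun r => div_nonneg hc.le (sq_nonneg r))

theorem stmt11_general (d : ℕ) (hd : 2 ≤ d) (v : ℝ → ℝ) (hv : ContinuousOn v (Set.Ioi 0))
    (C s : ℝ) (hs : s ∈ Set.Ioo (0 : ℝ) 2)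
    (hlow : ∀ r ∈ Set.Ioc (0 : ℝ) 1, v r ≥ -C * r ^ (-s))
    (hinf : Filter.Tendsto v Filter.atTop Filter.atTop) :
    (∀ ℓ : ℕ, 1 ≤ ℓ →
      BddBelow ((fun r : ℝ => v r + (ℓ : ℝ) * ((ℓ : ℝ) + (d : ℝ) - 2) / r ^ 2) ''
        Set.Ioi 0)) ∧
    (∀ ℓ ℓ' : ℕ, 1 ≤ ℓ → ℓ < ℓ' →
      sInf ((fun r : ℝ => v r + (ℓ : ℝ) * ((ℓ : ℝ) + (d : ℝ) - 2) / r ^ 2) '' Set.Ioi 0) <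
      sInf ((fun r : ℝ => v r + (ℓ' : ℝ) * ((ℓ' : ℝ) + (d : ℝ) - 2) / r ^ 2) ''
        Set.Ioi 0)) := by
  have hd' : (2 : ℝ) ≤ d := mod_cast hd
  have hmin (ℓ : ℕ) (hℓ : 1 ≤ ℓ) : ∃ r ∈ Ioi 0,
      IsMinOn (fun r : ℝ => v r + (ℓ : ℝ) * ((ℓ : ℝ) + (d : ℝ) - 2) / r ^ 2) (Ioi 0) r := by
    have hℓ' : (1 : ℝ) ≤ ℓ := mod_cast hℓ
    exact exists_isMinOn_add_div_sq hv hs.2 (eventually_of_mem (Ioc_mem_nhdsGT one_pos) hlow) hinf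
      (by nlinarith)
  have hbdd (ℓ : ℕ) (hℓ : 1 ≤ ℓ) := (hmin ℓ hℓ).choose_spec.2.bddBelow
  refine ⟨hbdd, fun ℓ ℓ' hℓ hℓℓ' => ?_⟩
  obtain ⟨r, hr, hrmin⟩ := hmin ℓ' (hℓ.trans hℓℓ'.le)
  have hℓ₁ : (1 : ℝ) ≤ ℓ := mod_cast hℓ
  have hℓ₂ : (ℓ : ℝ) < ℓ' := mod_cast hℓℓ'
  rw [hrmin.csInf_image_eq hr]
  calc _ ≤ v r + (ℓ : ℝ) * ((ℓ : ℝ) + (d : ℝ) - 2) / r ^ 2 :=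
        csInf_le (hbdd ℓ hℓ) (mem_image_of_mem _ hr)
    _ < v r + (ℓ' : ℝ) * ((ℓ' : ℝ) + (d : ℝ) - 2) / r ^ 2 := by
        have : (0 : ℝ) < r := hr
        gcongr v r + ?_ / _
        nlinarith

/-- Finiteness and strict monotonicity in `ℓ` of
`m_ℓ = inf_{r>0} (v(r) + ℓ(ℓ+d-2)/r²)`. -/
theorem stmt11 (d : ℕ) (hd : 2 ≤ d) (v : ℝ → ℝ) (hv : ContinuousOn v (Set.Ioi 0))
    (C s : ℝ) (hC : 0 < C) (hs : s ∈ Set.Ioo (0 : ℝ) 2)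
    (hlow : ∀ r ∈ Set.Ioc (0 : ℝ) 1, v r ≥ -C * r ^ (-s))
    (hinf : Filter.Tendsto v Filter.atTop Filter.atTop) :
    (∀ ℓ : ℕ, 1 ≤ ℓ →
      BddBelow ((fun r : ℝ => v r + (ℓ : ℝ) * ((ℓ : ℝ) + (d : ℝ) - 2) / r ^ 2) ''
        Set.Ioi 0)) ∧
    (∀ ℓ ℓ' : ℕ, 1 ≤ ℓ → ℓ < ℓ' →
      sInf ((fun r : ℝ => v r + (ℓ : ℝ) * ((ℓ : ℝ) + (d : ℝ) - 2) / r ^ 2) '' Set.Ioi 0) <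
      sInf ((fun r : ℝ => v r + (ℓ' : ℝ) * ((ℓ' : ℝ) + (d : ℝ) - 2) / r ^ 2) ''
        Set.Ioi 0)) :=
  stmt11_general d hd v hv C s hs hlow hinf
end

section
/- Let d ≥ 2 and let v : (0,∞) → ℝ be continuous with: (i) there exist C > 0 and s ∈ (0,2) such that v(r) ≥ -C·r^{-s} for r ∈ (0,1]; (ii) there exist c > 0, m > 1 and R > 0 such that c·r^m ≤ v(r) ≤ (1/c)·r^m for all r ≥ R. For λ ∈ ℝ define p_λ := sup{ℓ ∈ ℕ : ℓ ≥ 1 and inf_{r>0}(v(r) + ℓ(ℓ+d-2)/r²) < λ}. Then there exist K ≥ 1 and λ₀ > 0 such that for all λ ≥ λ₀, (1/K)·λ^{(m+2)/(2m)} ≤ p_λ ≤ K·λ^{(m+2)/(2m)}. -/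
/-!
Put `q = 2m/(m+2)` and `F_ℓ(r) = v(r) + ℓ(ℓ+d-2)/r²` (the effective potential). Then
`inf F_ℓ ≍ ℓ^q`. Above: at `r = ℓ^{2/(m+2)}` both `r^m` and `ℓ²/r²` equal `ℓ^q`. Below:
`v(r) ≥ c r^m - C r^{-s} - M` on all of `(0, ∞)`; since `s < 2`, half of `ℓ²/r² ≥ 1/r²` absorbs
`C r^{-s}` up to a constant, and `c r^m + ℓ²/(2r²) ≳ max (r^m) (ℓ²/r²) ≥ ℓ^q`, according to
whether `r` lies above or below `ℓ^{2/(m+2)}`. Inverting `inf F_ℓ ≍ ℓ^q` gives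
`p_λ ≍ λ^{1/q} = λ^{(m+2)/(2m)}`.
-/

open Set Filter

lemma rpow_two_div_add_two_rpow {x : ℝ} (hx : 0 ≤ x) (m : ℝ) :
    (x ^ (2 / (m + 2))) ^ m = x ^ (2 * m / (m + 2)) := by
  rw [← Real.rpow_mul hx]
  ring_nf

lemma sq_div_sq_rpow_two_div_add_two {x : ℝ} (hx : 0 < x) {m : ℝ} (hm : m + 2 ≠ 0) :
    x ^ 2 / (x ^ (2 / (m + 2))) ^ 2 = x ^ (2 * m / (m + 2)) := by
  rw [← Real.rpow_natCast (x ^ _) 2, ← Real.rpow_mul hx.le, ← Real.rpow_natCast x 2,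
    ← Real.rpow_sub hx]
  congr 1
  field_simp
  ring

lemma rpow_le_max_rpow_sq_div {m x r : ℝ} (hm : 0 ≤ m) (hx : 0 < x) (hr : 0 < r) :
    x ^ (2 * m / (m + 2)) ≤ max (r ^ m) (x ^ 2 / r ^ 2) := by
  have hm2 : m + 2 ≠ 0 := by positivity
  have hy : 0 < x ^ (2 / (m + 2)) := by positivity
  rcases le_or_gt (x ^ (2 / (m + 2))) r with h | h
  · rw [← rpow_two_div_add_two_rpow hx.le m]
    exact le_max_of_le_left (Real.rpow_le_rpow hy.le h hm)
  · rw [← sq_div_sq_rpow_two_div_add_two hx hm2]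
    exact le_max_of_le_right (by gcongr)

lemma exists_mul_rpow_neg_le_div_sq_add {s A C : ℝ} (hs0 : 0 ≤ s) (hs2 : s < 2) (hA : 0 < A)
    (hC : 0 < C) : ∃ b, ∀ r > 0, C * r ^ (-s) ≤ A / r ^ 2 + b := by
  refine ⟨C * (A / C) ^ (-s / (2 - s)), fun r hr => ?_⟩
  have hb : 0 ≤ C * (A / C) ^ (-s / (2 - s)) := by positivity
  rcases le_or_gt (C * r ^ (-s)) (A / r ^ 2) with h | h
  · linarith
  · have hsplit : r ^ (2 - s) = r ^ (-s) * r ^ 2 := by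
      rw [sub_eq_neg_add, Real.rpow_add hr, Real.rpow_two]
    have hlt : A / C < r ^ (2 - s) := by
      rw [hsplit, div_lt_iff₀ hC]
      rw [div_lt_iff₀ (by positivity)] at h
      linarith
    have hrs : r ^ (-s) = (r ^ (2 - s)) ^ (-s / (2 - s)) := by
      rw [← Real.rpow_mul hr.le]
      congr 1
      field_simp [(by linarith : 2 - s ≠ 0)]
    have : r ^ (-s) ≤ (A / C) ^ (-s / (2 - s)) := by
      rw [hrs]
      exact Real.rpow_le_rpow_of_nonpos (by positivity) hlt.le
        (div_nonpos_of_nonpos_of_nonneg (by linarith) (by linarith))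
    have : C * r ^ (-s) ≤ C * (A / C) ^ (-s / (2 - s)) := by gcongr
    have : 0 ≤ A / r ^ 2 := by positivity
    linarith

lemma exists_forall_mul_rpow_sub_le {v : ℝ → ℝ} {C s c m R : ℝ} (hv : ContinuousOn v (Ioi 0))
    (hC : 0 ≤ C) (hc : 0 ≤ c) (hm : 0 ≤ m) (hlow : ∀ r ∈ Ioc (0 : ℝ) 1, v r ≥ -C * r ^ (-s))
    (hgrow : ∀ r ≥ R, c * r ^ m ≤ v r) :
    ∃ M, ∀ r > 0, c * r ^ m - C * r ^ (-s) - M ≤ v r := by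
  set R' := max R 1
  obtain ⟨M₀, hM₀⟩ := isCompact_Icc.exists_bound_of_continuousOn
    (hv.mono fun r (hr : r ∈ Icc 1 R') => one_pos.trans_le hr.1)
  have hM₀0 : 0 ≤ M₀ := (norm_nonneg _).trans (hM₀ 1 ⟨le_rfl, le_max_right R 1⟩)
  have hcR' : c ≤ c * R' ^ m := le_mul_of_one_le_right hc (Real.one_le_rpow (le_max_right R 1) hm)
  refine ⟨c * R' ^ m + M₀, fun r hr => ?_⟩
  have hCr : 0 ≤ C * r ^ (-s) := by positivity
  rcases le_or_gt r 1 with h1 | h1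
  · have : c * r ^ m ≤ c := mul_le_of_le_one_right hc (Real.rpow_le_one hr.le h1 hm)
    have := hlow r ⟨hr, h1⟩
    linarith
  rcases le_or_gt r R' with h2 | h2
  · have : c * r ^ m ≤ c * R' ^ m := by gcongr
    have := neg_le_of_abs_le (hM₀ r ⟨h1.le, h2⟩)
    linarith
  · have := hgrow r ((le_max_left R 1).trans h2.le)
    linarith

lemma exists_mul_rpow_sub_le_effective_potential {d : ℕ} (hd : 2 ≤ d) {v : ℝ → ℝ} {C s c m M : ℝ}
    (hC : 0 < C) (hs0 : 0 ≤ s) (hs2 : s < 2) (hc : 0 < c) (hm : 0 ≤ m)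
    (hv : ∀ r > 0, c * r ^ m - C * r ^ (-s) - M ≤ v r) :
    ∃ a > 0, ∃ b, ∀ ℓ : ℕ, 1 ≤ ℓ → ∀ r > 0,
      a * (ℓ : ℝ) ^ (2 * m / (m + 2)) - b ≤ v r + ℓ * (ℓ + d - 2) / r ^ 2 := by
  obtain ⟨b, hb⟩ := exists_mul_rpow_neg_le_div_sq_add hs0 hs2 (one_half_pos (α := ℝ)) hC
  refine ⟨min c (1 / 2), lt_min hc one_half_pos, b + M, fun ℓ hℓ r hr => ?_⟩
  have hℓ1 : (1 : ℝ) ≤ ℓ := by exact_mod_cast hℓ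
  have hd2 : (2 : ℝ) ≤ d := by exact_mod_cast hd
  have hbalance : min c (1 / 2) * (ℓ : ℝ) ^ (2 * m / (m + 2)) ≤
      c * r ^ m + 1 / 2 * (ℓ ^ 2 / r ^ 2) :=
    calc min c (1 / 2) * (ℓ : ℝ) ^ (2 * m / (m + 2))
        ≤ min c (1 / 2) * max (r ^ m) (ℓ ^ 2 / r ^ 2) := by
          gcongr; exact rpow_le_max_rpow_sq_div hm (by positivity) hr
      _ ≤ c * r ^ m + 1 / 2 * (ℓ ^ 2 / r ^ 2) := by
          rw [mul_max_of_nonneg _ _ (le_min hc.le one_half_pos.le)]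
          have : 0 ≤ r ^ m := by positivity
          have : 0 ≤ (ℓ : ℝ) ^ 2 / r ^ 2 := by positivity
          refine max_le ?_ ?_ <;> nlinarith [min_le_left c (1 / 2), min_le_right c (1 / 2)]
  have hsing : 1 / 2 / r ^ 2 ≤ 1 / 2 * (ℓ ^ 2 / r ^ 2) := by
    rw [mul_div_assoc']; gcongr; nlinarith
  have hcentr : (ℓ : ℝ) ^ 2 / r ^ 2 ≤ ℓ * (ℓ + d - 2) / r ^ 2 := by
    gcongr; nlinarith
  linarith [hb r hr, hv r hr]

lemma effective_potential_at_rpow_le {d : ℕ} (hd : 1 ≤ d) {v : ℝ → ℝ} {K m : ℝ} (hm : 0 ≤ m) {ℓ : ℕ}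
    (hℓ : 1 ≤ ℓ) (hv : v ((ℓ : ℝ) ^ (2 / (m + 2))) ≤ K * ((ℓ : ℝ) ^ (2 / (m + 2))) ^ m) :
    v ((ℓ : ℝ) ^ (2 / (m + 2))) + ℓ * (ℓ + d - 2) / ((ℓ : ℝ) ^ (2 / (m + 2))) ^ 2 ≤
      (K + d) * (ℓ : ℝ) ^ (2 * m / (m + 2)) := by
  have hℓ1 : (1 : ℝ) ≤ ℓ := by exact_mod_cast hℓ
  have hd1 : (1 : ℝ) ≤ d := by exact_mod_cast hd
  have hnum : (ℓ : ℝ) * (ℓ + d - 2) ≤ d * ℓ ^ 2 := by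
    have : (ℓ : ℝ) + d - 2 ≤ d * ℓ := by
      nlinarith [mul_nonneg (sub_nonneg.2 hd1) (sub_nonneg.2 hℓ1)]
    nlinarith
  have hcentr : ℓ * (ℓ + d - 2) / ((ℓ : ℝ) ^ (2 / (m + 2))) ^ 2 ≤
      d * (ℓ ^ 2 / ((ℓ : ℝ) ^ (2 / (m + 2))) ^ 2) := by
    rw [mul_div_assoc']
    exact div_le_div_of_nonneg_right hnum (by positivity)
  rw [rpow_two_div_add_two_rpow (by positivity)] at hv
  rw [sq_div_sq_rpow_two_div_add_two (by positivity) (by positivity)] at hcentr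
  linarith

lemma natCast_le_of_mem_sublevel {f : ℕ → ℝ} {q a b lam : ℝ} (hq : 0 < q) (ha : 0 < a)
    (hf : ∀ ℓ : ℕ, 1 ≤ ℓ → a * (ℓ : ℝ) ^ q - b ≤ f ℓ) (hb : b ≤ lam) {ℓ : ℕ}
    (hℓ : ℓ ∈ {ℓ : ℕ | 1 ≤ ℓ ∧ f ℓ < lam}) : (ℓ : ℝ) ≤ (2 / a) ^ q⁻¹ * lam ^ q⁻¹ := by
  obtain ⟨hℓ1, hlt⟩ := hℓ
  have := hf ℓ hℓ1
  have hpos : 0 < a * (ℓ : ℝ) ^ q := by positivity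
  have hpow : (ℓ : ℝ) ^ q ≤ 2 / a * lam := by
    rw [div_mul_eq_mul_div, le_div_iff₀ ha]; linarith
  calc (ℓ : ℝ) = ((ℓ : ℝ) ^ q) ^ q⁻¹ := (Real.rpow_rpow_inv (by positivity) hq.ne').symm
    _ ≤ (2 / a * lam) ^ q⁻¹ := by gcongr
    _ = (2 / a) ^ q⁻¹ * lam ^ q⁻¹ := Real.mul_rpow (by positivity) (by linarith)

lemma exists_mem_sublevel_ge {f : ℕ → ℝ} {q B lam : ℝ} {N : ℕ} (hq : 0 < q) (hB : 0 < B)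
    (hf : ∀ ℓ ≥ N, f ℓ ≤ B * (ℓ : ℝ) ^ q) (hlam : 2 * B * ((N : ℝ) + 1) ^ q ≤ lam) :
    ∃ ℓ ∈ {ℓ : ℕ | 1 ≤ ℓ ∧ f ℓ < lam}, (lam / (2 * B)) ^ q⁻¹ / 2 ≤ ℓ := by
  set θ := (lam / (2 * B)) ^ q⁻¹
  have hlam0 : 0 < lam := lt_of_lt_of_le (by positivity) hlam
  have hθq : θ ^ q = lam / (2 * B) := Real.rpow_inv_rpow (by positivity) hq.ne'
  have hNθ : (N : ℝ) + 1 ≤ θ := by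
    rw [← Real.rpow_rpow_inv (by positivity : (0 : ℝ) ≤ N + 1) hq.ne']
    refine Real.rpow_le_rpow (by positivity) ?_ (by positivity)
    rwa [le_div_iff₀ (by positivity), mul_comm]
  have hNℓ : N + 1 ≤ ⌊θ⌋₊ := Nat.le_floor (by exact_mod_cast hNθ)
  refine ⟨⌊θ⌋₊, ⟨by omega, ?_⟩, ?_⟩
  · calc f ⌊θ⌋₊ ≤ B * (⌊θ⌋₊ : ℝ) ^ q := hf _ (by omega)
      _ ≤ B * θ ^ q := by gcongr; exact Nat.floor_le (by positivity)
      _ = lam / 2 := by rw [hθq]; field_simp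
      _ < lam := by linarith
  · have : (1 : ℝ) ≤ ⌊θ⌋₊ := by exact_mod_cast (by omega : 1 ≤ ⌊θ⌋₊)
    linarith [Nat.lt_floor_add_one θ]

lemma exists_bounds_sSup_sublevel {f : ℕ → ℝ} {q a b B : ℝ} (hq : 0 < q) (ha : 0 < a)
    (hB : 0 < B) (hlow : ∀ ℓ : ℕ, 1 ≤ ℓ → a * (ℓ : ℝ) ^ q - b ≤ f ℓ)
    (hup : ∀ᶠ ℓ : ℕ in atTop, f ℓ ≤ B * (ℓ : ℝ) ^ q) :
    ∃ K ≥ (1 : ℝ), ∃ lam₀ > (0 : ℝ), ∀ lam ≥ lam₀,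
      (1 / K) * lam ^ q⁻¹ ≤ ((sSup {ℓ : ℕ | 1 ≤ ℓ ∧ f ℓ < lam} : ℕ) : ℝ) ∧
      ((sSup {ℓ : ℕ | 1 ≤ ℓ ∧ f ℓ < lam} : ℕ) : ℝ) ≤ K * lam ^ q⁻¹ := by
  obtain ⟨N, hN⟩ := eventually_atTop.1 hup
  set K := max 1 (max (2 * (2 * B) ^ q⁻¹) ((2 / a) ^ q⁻¹))
  refine ⟨K, le_max_left _ _, max 1 (max b (2 * B * ((N : ℝ) + 1) ^ q)), by positivity,
    fun lam hlam => ?_⟩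
  simp only [ge_iff_le, max_le_iff] at hlam
  obtain ⟨hlam1, hlamb, hlamN⟩ := hlam
  set S := {ℓ : ℕ | 1 ≤ ℓ ∧ f ℓ < lam}
  obtain ⟨ℓ₀, hℓ₀S, hℓ₀⟩ := exists_mem_sublevel_ge hq hB hN hlamN
  have hS : BddAbove S := ⟨⌈(2 / a) ^ q⁻¹ * lam ^ q⁻¹⌉₊, fun ℓ hℓ => by
    exact_mod_cast (natCast_le_of_mem_sublevel hq ha hlow hlamb hℓ).trans (Nat.le_ceil _)⟩
  constructor
  · calc 1 / K * lam ^ q⁻¹ ≤ lam ^ q⁻¹ / (2 * (2 * B) ^ q⁻¹) := by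
          rw [one_div_mul_eq_div]
          gcongr
          exact (le_max_left _ _).trans (le_max_right _ _)
      _ = (lam / (2 * B)) ^ q⁻¹ / 2 := by
          rw [Real.div_rpow (by positivity) (by positivity), div_div, mul_comm]
      _ ≤ ℓ₀ := hℓ₀
      _ ≤ sSup S := by exact_mod_cast le_csSup hS hℓ₀S
  · calc ((sSup S : ℕ) : ℝ) ≤ (2 / a) ^ q⁻¹ * lam ^ q⁻¹ :=
          natCast_le_of_mem_sublevel hq ha hlow hlamb (Nat.sSup_mem ⟨ℓ₀, hℓ₀S⟩ hS)
      _ ≤ K * lam ^ q⁻¹ := by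
          gcongr
          exact (le_max_right _ _).trans (le_max_right _ _)

theorem stmt12_general (d : ℕ) (hd : 2 ≤ d) (v : ℝ → ℝ) (hv : ContinuousOn v (Set.Ioi 0))
    (C s : ℝ) (hC : 0 < C) (hs : s ∈ Set.Ioo (0 : ℝ) 2)
    (hlow : ∀ r ∈ Set.Ioc (0 : ℝ) 1, v r ≥ -C * r ^ (-s))
    (c m R : ℝ) (hc : 0 < c) (hm : 1 < m)
    (hgrow : ∀ r ≥ R, c * r ^ m ≤ v r ∧ v r ≤ (1 / c) * r ^ m) :
    ∃ K ≥ (1 : ℝ), ∃ lam₀ > (0 : ℝ), ∀ lam ≥ lam₀,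
      (1 / K) * lam ^ ((m + 2) / (2 * m)) ≤
        ((sSup {ℓ : ℕ | 1 ≤ ℓ ∧
          sInf ((fun r : ℝ => v r + (ℓ : ℝ) * ((ℓ : ℝ) + (d : ℝ) - 2) / r ^ 2) ''
            Set.Ioi 0) < lam} : ℕ) : ℝ) ∧
      ((sSup {ℓ : ℕ | 1 ≤ ℓ ∧
          sInf ((fun r : ℝ => v r + (ℓ : ℝ) * ((ℓ : ℝ) + (d : ℝ) - 2) / r ^ 2) ''
            Set.Ioi 0) < lam} : ℕ) : ℝ) ≤ K * lam ^ ((m + 2) / (2 * m)) := by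
  obtain ⟨hs0, hs2⟩ := hs
  have hm0 : 0 ≤ m := by linarith
  obtain ⟨M, hM⟩ := exists_forall_mul_rpow_sub_le hv hC.le hc.le hm0 hlow fun r hr => (hgrow r hr).1
  obtain ⟨a, ha, b, hab⟩ := exists_mul_rpow_sub_le_effective_potential hd hC hs0.le hs2 hc hm0 hM
  rw [show (m + 2) / (2 * m) = (2 * m / (m + 2))⁻¹ from (inv_div _ _).symm]
  refine exists_bounds_sSup_sublevel (div_pos (by linarith) (by linarith)) ha
    (by positivity : 0 < 1 / c + d) (fun ℓ hℓ => le_csInf (nonempty_Ioi.image _)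
      (forall_mem_image.2 (hab ℓ hℓ))) ?_
  have hRle : ∀ᶠ ℓ : ℕ in atTop, R ≤ (ℓ : ℝ) ^ (2 / (m + 2)) :=
    ((tendsto_rpow_atTop (by positivity)).comp tendsto_natCast_atTop_atTop).eventually_ge_atTop R
  filter_upwards [eventually_ge_atTop 1, hRle] with ℓ hℓ hℓR
  have hr : (ℓ : ℝ) ^ (2 / (m + 2)) ∈ Ioi 0 := Real.rpow_pos_of_pos (Nat.cast_pos.2 hℓ) _
  exact (csInf_le ⟨_, forall_mem_image.2 (hab ℓ hℓ)⟩ (mem_image_of_mem _ hr)).trans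
    (effective_potential_at_rpow_le (by omega) hm0 hℓ (hgrow _ hℓR).2)

/-- Corollary 3.7 (Case A): the maximal degree `p_λ` of spherical harmonics occurring in
an eigenfunction with eigenvalue `λ` satisfies `p_λ ≍ λ^{(m+2)/(2m)}` as `λ → +∞`. -/
theorem stmt12 (d : ℕ) (hd : 2 ≤ d) (v : ℝ → ℝ) (hv : ContinuousOn v (Set.Ioi 0))
    (C s : ℝ) (hC : 0 < C) (hs : s ∈ Set.Ioo (0 : ℝ) 2)
    (hlow : ∀ r ∈ Set.Ioc (0 : ℝ) 1, v r ≥ -C * r ^ (-s))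
    (c m R : ℝ) (hc : 0 < c) (hm : 1 < m) (hR : 0 < R)
    (hgrow : ∀ r ≥ R, c * r ^ m ≤ v r ∧ v r ≤ (1 / c) * r ^ m) :
    ∃ K ≥ (1 : ℝ), ∃ lam₀ > (0 : ℝ), ∀ lam ≥ lam₀,
      (1 / K) * lam ^ ((m + 2) / (2 * m)) ≤
        ((sSup {ℓ : ℕ | 1 ≤ ℓ ∧
          sInf ((fun r : ℝ => v r + (ℓ : ℝ) * ((ℓ : ℝ) + (d : ℝ) - 2) / r ^ 2) ''
            Set.Ioi 0) < lam} : ℕ) : ℝ) ∧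
      ((sSup {ℓ : ℕ | 1 ≤ ℓ ∧
          sInf ((fun r : ℝ => v r + (ℓ : ℝ) * ((ℓ : ℝ) + (d : ℝ) - 2) / r ^ 2) ''
            Set.Ioi 0) < lam} : ℕ) : ℝ) ≤ K * lam ^ ((m + 2) / (2 * m)) :=
  stmt12_general d hd v hv C s hC hs hlow c m R hc hm hgrow
end

section
/- Let d ≥ 2 and let v : (0,∞) → ℝ be continuous with: (i) there exist C > 0 and s ∈ (0,2) such that v(r) ≥ -C·r^{-s} for r ∈ (0,1]; (ii) there exist c > 0, m ∈ (-2,0) and R > 0 such that -(1/c)·r^m ≤ v(r) ≤ -c·r^m for all r ≥ R. For λ < 0 define p_λ := sup{ℓ ∈ ℕ : ℓ ≥ 1 and inf_{r>0}(v(r) + ℓ(ℓ+d-2)/r²) < λ}. Then there exist K ≥ 1 and δ > 0 such that for all λ ∈ (-δ, 0), (1/K)·(-λ)^{(m+2)/(2m)} ≤ p_λ ≤ K·(-λ)^{(m+2)/(2m)}. -/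
/-!
Write `β = 2m/(m+2) < 0` and `V_ℓ(r) = v(r) + ℓ(ℓ+d-2)/r²`. For large `ℓ`, `inf V_ℓ ≍ -ℓ^β`.
From below, `v ≥ -A/r² - A r^m` on `(0, ∞)` (the singularity `r^{-s}`, `s < 2`, and the compact
middle range are dominated by `1/r²`); half of the centrifugal term absorbs `-A/r²`, and the
model `-A r^m + ℓ²/(2r²)` is bounded below by `-c₂ ℓ^β`, splitting at the radius where its two
terms balance. From above, evaluate `V_ℓ` at `ρ ≍ ℓ^{2/(m+2)}`, chosen so large that
`v(ρ) ≤ -c ρ^m` and so that the centrifugal term is at most `(c/2) ρ^m`. Since `ℓ ↦ -ℓ^β`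
increases to `0`, inverting these bounds gives `p_λ ≍ (-λ)^{1/β}` as `λ → 0⁻`.
-/

open Real Set Filter

lemma rpow_mul_sq {r : ℝ} (hr : 0 < r) (m : ℝ) : r ^ m * r ^ 2 = r ^ (m + 2) := by
  simpa using (rpow_add_natCast hr.ne' m 2).symm

lemma rpow_inv_add_two_rpow_mul_sq {x y : ℝ} (hx : 0 ≤ x) (hy : 0 ≤ y) (m : ℝ) :
    ((y * x ^ 2) ^ (m + 2)⁻¹) ^ m = y ^ (m / (m + 2)) * x ^ (2 * m / (m + 2)) := by
  rw [← rpow_mul (by positivity), mul_rpow hy (by positivity), ← rpow_natCast x 2,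
    ← rpow_mul hx]
  congr 2 <;> push_cast <;> ring

lemma rpow_le_div_sq_add {m t r : ℝ} (hm : -2 < m) (hm0 : m ≤ 0) (ht : 0 < t) (hr : 0 < r) :
    r ^ m ≤ t / r ^ 2 + (t ^ (m + 2)⁻¹) ^ m := by
  set r₀ := t ^ (m + 2)⁻¹
  have hr₀ : 0 < r₀ := rpow_pos_of_pos ht _
  rcases le_total r r₀ with h | h
  · have : r ^ (m + 2) ≤ t := by
      simpa only [r₀, rpow_inv_rpow ht.le (by linarith : m + 2 ≠ 0)]
        using rpow_le_rpow hr.le h (by linarith : 0 ≤ m + 2)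
    have : r ^ m ≤ t / r ^ 2 := by rwa [le_div_iff₀ (by positivity), rpow_mul_sq hr]
    linarith [rpow_pos_of_pos hr₀ m]
  · linarith [rpow_le_rpow_of_nonpos hr₀ h hm0, div_nonneg ht.le (sq_nonneg r)]

lemma lt_mul_rpow_iff_of_neg {x y c β : ℝ} (hx : 0 < x) (hy : 0 < y) (hc : 0 < c)
    (hβ : β < 0) : y < c * x ^ β ↔ x < y ^ β⁻¹ / c ^ β⁻¹ := by
  rw [← div_rpow hy.le hc.le, lt_rpow_inv_iff_of_neg hx (div_pos hy hc) hβ, div_lt_iff₀' hc]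

lemma natCast_sSup_bounds_of_rpow_bounds {E : ℕ → ℝ} {β c₂ c₃ lam : ℝ} {L : ℕ} (hβ : β < 0)
    (hc₂ : 0 < c₂) (hc₃ : 0 < c₃)
    (hL : ∀ ℓ ≥ L, -c₂ * (ℓ : ℝ) ^ β ≤ E ℓ ∧ E ℓ ≤ -c₃ * (ℓ : ℝ) ^ β) (hlam : lam < 0)
    (hτ : (2 * c₃ ^ β⁻¹ + 1) * (L + 1) < (-lam) ^ β⁻¹) :
    (-lam) ^ β⁻¹ / (2 * c₃ ^ β⁻¹) ≤ ((sSup {ℓ : ℕ | 1 ≤ ℓ ∧ E ℓ < lam} : ℕ) : ℝ) ∧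
      ((sSup {ℓ : ℕ | 1 ≤ ℓ ∧ E ℓ < lam} : ℕ) : ℝ) ≤ (1 + 1 / c₂ ^ β⁻¹) * (-lam) ^ β⁻¹ := by
  set k₂ := c₂ ^ β⁻¹
  set k₃ := c₃ ^ β⁻¹
  set τ := (-lam) ^ β⁻¹
  set S := {ℓ : ℕ | 1 ≤ ℓ ∧ E ℓ < lam}
  have hk₂ : 0 < k₂ := rpow_pos_of_pos hc₂ _
  have hk₃ : 0 < k₃ := rpow_pos_of_pos hc₃ _
  have hLτ : (L : ℝ) < τ := by nlinarith
  have hτ0 : 0 < τ := (Nat.cast_nonneg L).trans_lt hLτ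
  have hbound : ∀ ℓ ∈ S, (ℓ : ℝ) ≤ (1 + 1 / k₂) * τ := by
    rintro ℓ ⟨hℓ, hEℓ⟩
    have hτk₂ : 0 ≤ τ / k₂ := div_nonneg hτ0.le hk₂.le
    rcases lt_or_ge ℓ L with hℓL | hLℓ
    · have : (ℓ : ℝ) < L := by exact_mod_cast hℓL
      linarith [div_eq_mul_one_div τ k₂]
    · have := (lt_mul_rpow_iff_of_neg (Nat.cast_pos.2 hℓ) (neg_pos.2 hlam) hc₂ hβ).1
        (by linarith [(hL ℓ hLℓ).1])
      linarith [div_eq_mul_one_div τ k₂]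
  have hbdd : BddAbove S :=
    ⟨⌈(1 + 1 / k₂) * τ⌉₊, fun ℓ hℓ => Nat.cast_le.1 ((hbound ℓ hℓ).trans (Nat.le_ceil _))⟩
  set ℓ₀ := ⌈τ / (2 * k₃)⌉₊
  have hℓ₀ : τ / (2 * k₃) ≤ ℓ₀ := Nat.le_ceil _
  have hLℓ₀ : L + 1 < τ / (2 * k₃) := by rw [lt_div_iff₀ (by positivity)]; nlinarith
  have hℓ₀S : ℓ₀ ∈ S := by
    have hℓ₀τ : (ℓ₀ : ℝ) < τ / k₃ := by
      have : τ / (2 * k₃) + τ / (2 * k₃) = τ / k₃ := by field_simp; ring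
      linarith [Nat.ceil_lt_add_one (div_nonneg hτ0.le (by positivity) : 0 ≤ τ / (2 * k₃))]
    have hLℓ₀' : L ≤ ℓ₀ := by exact_mod_cast (by linarith : (L : ℝ) ≤ ℓ₀)
    have hℓ₀pos : 0 < ℓ₀ := by exact_mod_cast (by linarith : (0 : ℝ) < ℓ₀)
    have := (lt_mul_rpow_iff_of_neg (Nat.cast_pos.2 hℓ₀pos) (neg_pos.2 hlam) hc₃ hβ).2 hℓ₀τ
    exact ⟨hℓ₀pos, by linarith [(hL ℓ₀ hLℓ₀').2]⟩
  exact ⟨hℓ₀.trans (by exact_mod_cast le_csSup hbdd hℓ₀S),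
    hbound _ (Nat.sSup_mem ⟨ℓ₀, hℓ₀S⟩ hbdd)⟩

theorem exists_bounds_sSup_of_eventually_rpow_bounds {E : ℕ → ℝ} {β c₂ c₃ : ℝ} (hβ : β < 0)
    (hc₂ : 0 < c₂) (hc₃ : 0 < c₃)
    (hlow : ∀ᶠ ℓ : ℕ in atTop, -c₂ * (ℓ : ℝ) ^ β ≤ E ℓ)
    (hup : ∀ᶠ ℓ : ℕ in atTop, E ℓ ≤ -c₃ * (ℓ : ℝ) ^ β) :
    ∃ K ≥ (1 : ℝ), ∃ δ > (0 : ℝ), ∀ lam ∈ Ioo (-δ) (0 : ℝ),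
      (1 / K) * (-lam) ^ β⁻¹ ≤ ((sSup {ℓ : ℕ | 1 ≤ ℓ ∧ E ℓ < lam} : ℕ) : ℝ) ∧
      ((sSup {ℓ : ℕ | 1 ≤ ℓ ∧ E ℓ < lam} : ℕ) : ℝ) ≤ K * (-lam) ^ β⁻¹ := by
  obtain ⟨L, hL⟩ := eventually_atTop.1 (hlow.and hup)
  have hk₂ : 0 < 1 / c₂ ^ β⁻¹ := one_div_pos.2 (rpow_pos_of_pos hc₂ _)
  have hk₃ : 0 < c₃ ^ β⁻¹ := rpow_pos_of_pos hc₃ _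
  set T := (2 * c₃ ^ β⁻¹ + 1) * (L + 1)
  have hT : 0 < T := by positivity
  refine ⟨1 + 1 / c₂ ^ β⁻¹ + 2 * c₃ ^ β⁻¹, by linarith, T ^ β, rpow_pos_of_pos hT _,
    fun lam ⟨hδ, hlam⟩ => ?_⟩
  have hτ : T < (-lam) ^ β⁻¹ := (lt_rpow_inv_iff_of_neg hT (neg_pos.2 hlam) hβ).2 (by linarith)
  obtain ⟨hlower, hupper⟩ := natCast_sSup_bounds_of_rpow_bounds hβ hc₂ hc₃ hL hlam hτ
  have hτ0 : 0 ≤ (-lam) ^ β⁻¹ := hT.le.trans hτ.le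
  constructor
  · rw [one_div_mul_eq_div]
    exact (div_le_div_of_nonneg_left hτ0 (by positivity) (by linarith)).trans hlower
  · exact hupper.trans (mul_le_mul_of_nonneg_right (by linarith) hτ0)

lemma exists_neg_div_sq_sub_mul_rpow_le {v : ℝ → ℝ} {C s c m R : ℝ} (hv : ContinuousOn v (Ioi 0))
    (hs : s ≤ 2) (hc : 0 < c)
    (hlow : ∀ r ∈ Ioc (0 : ℝ) 1, v r ≥ -C * r ^ (-s))
    (hdecay : ∀ r ≥ R, -(1 / c) * r ^ m ≤ v r) :
    ∃ A > 0, ∀ r > 0, -A / r ^ 2 - A * r ^ m ≤ v r := by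
  obtain ⟨M, hM⟩ : BddBelow (v '' Icc 1 R) :=
    isCompact_Icc.bddBelow_image (hv.mono fun r hr => one_pos.trans_le hr.1)
  set A := max (max C (|M| * R ^ 2)) (1 / c)
  have hCA : C ≤ A := (le_max_left _ _).trans (le_max_left _ _)
  have hMA : |M| * R ^ 2 ≤ A := (le_max_right _ _).trans (le_max_left _ _)
  have hcA : 1 / c ≤ A := le_max_right _ _
  have hA : 0 < A := (one_div_pos.2 hc).trans_le hcA
  refine ⟨A, hA, fun r hr => ?_⟩
  rw [neg_div]
  have hAr : 0 ≤ A * r ^ m := mul_nonneg hA.le (rpow_nonneg hr.le m)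
  have hAr2 : 0 ≤ A / r ^ 2 := by positivity
  rcases le_or_gt r 1 with hr1 | hr1
  · have : r ^ (-s) ≤ (r ^ 2)⁻¹ := by
      simpa [rpow_neg hr.le] using rpow_le_rpow_of_exponent_ge hr hr1 (by linarith : -2 ≤ -s)
    have : C * r ^ (-s) ≤ A / r ^ 2 := by
      rw [div_eq_mul_inv]; exact mul_le_mul hCA this (by positivity) hA.le
    linarith [hlow r ⟨hr, hr1⟩]
  rcases lt_or_ge r R with hrR | hrR
  · have : |M| ≤ A / r ^ 2 := by
      rw [le_div_iff₀ (by positivity)]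
      exact le_trans (by gcongr) hMA
    linarith [hM (mem_image_of_mem v ⟨hr1.le, hrR.le⟩), neg_abs_le M]
  · linarith [hdecay r hrR, mul_le_mul_of_nonneg_right hcA (rpow_nonneg hr.le m)]

noncomputable def effectivePotential (v : ℝ → ℝ) (d ℓ : ℕ) (r : ℝ) : ℝ :=
  v r + (ℓ : ℝ) * ((ℓ : ℝ) + (d : ℝ) - 2) / r ^ 2

section EffectivePotential

variable {v : ℝ → ℝ} {d : ℕ} {m : ℝ}

lemma sq_le_mul_add_sub_two (hd : 2 ≤ d) (ℓ : ℕ) :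
    (ℓ : ℝ) ^ 2 ≤ ℓ * ((ℓ : ℝ) + d - 2) := by
  have : (2 : ℝ) ≤ d := by exact_mod_cast hd
  nlinarith [(ℓ.cast_nonneg : (0 : ℝ) ≤ ℓ)]

lemma mul_add_sub_two_le (hd : 1 ≤ d) (ℓ : ℕ) :
    (ℓ : ℝ) * ((ℓ : ℝ) + d - 2) ≤ d * (ℓ : ℝ) ^ 2 := by
  have : (1 : ℝ) ≤ d := by exact_mod_cast hd
  rcases ℓ.eq_zero_or_pos with rfl | hℓ
  · simp
  · have : (1 : ℝ) ≤ ℓ := by exact_mod_cast hℓ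
    nlinarith [mul_nonneg (mul_nonneg (sub_nonneg.2 this) (sub_nonneg.2 ‹(1 : ℝ) ≤ d›))
      (ℓ.cast_nonneg : (0 : ℝ) ≤ ℓ)]

lemma exists_eventually_neg_rpow_le_effectivePotential (hd : 2 ≤ d) (hm : -2 < m) (hm0 : m ≤ 0)
    {A : ℝ} (hA : 0 < A) (hvA : ∀ r > 0, -A / r ^ 2 - A * r ^ m ≤ v r) :
    ∃ c₂ > 0, ∀ᶠ ℓ : ℕ in atTop, ∀ r > 0,
      -c₂ * (ℓ : ℝ) ^ (2 * m / (m + 2)) ≤ effectivePotential v d ℓ r := by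
  refine ⟨A * (2 * A)⁻¹ ^ (m / (m + 2)), by positivity, ?_⟩
  have hsq : Tendsto (fun ℓ : ℕ => (ℓ : ℝ) ^ 2) atTop atTop :=
    (tendsto_pow_atTop two_ne_zero).comp tendsto_natCast_atTop_atTop
  filter_upwards [hsq.eventually_ge_atTop (2 * A)] with ℓ hℓ r hr
  have hmodel := rpow_le_div_sq_add hm hm0
    (mul_pos (by positivity) (by linarith) : 0 < (2 * A)⁻¹ * (ℓ : ℝ) ^ 2) hr
  rw [rpow_inv_add_two_rpow_mul_sq ℓ.cast_nonneg (by positivity)] at hmodel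
  replace hmodel := mul_le_mul_of_nonneg_left hmodel hA.le
  rw [mul_add] at hmodel
  have hcent : (ℓ : ℝ) ^ 2 / r ^ 2 ≤ ℓ * ((ℓ : ℝ) + d - 2) / r ^ 2 := by
    gcongr; exact sq_le_mul_add_sub_two hd ℓ
  have hhalf : A * ((2 * A)⁻¹ * (ℓ : ℝ) ^ 2 / r ^ 2) = (ℓ : ℝ) ^ 2 / r ^ 2 / 2 := by
    field_simp
  have hA_le : A / r ^ 2 ≤ (ℓ : ℝ) ^ 2 / r ^ 2 / 2 := by
    rw [le_div_iff₀ two_pos, div_mul_eq_mul_div]; gcongr; linarith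
  rw [effectivePotential]
  linarith [hvA r hr, neg_div (r ^ 2) A]

lemma exists_eventually_effectivePotential_le_neg_rpow (hd : 1 ≤ d) (hm : -2 < m) {c R : ℝ}
    (hc : 0 < c) (hdecay : ∀ r ≥ R, v r ≤ -c * r ^ m) :
    ∃ c₃ > 0, ∀ᶠ ℓ : ℕ in atTop, ∃ r > 0,
      effectivePotential v d ℓ r ≤ -c₃ * (ℓ : ℝ) ^ (2 * m / (m + 2)) := by
  have hd' : (1 : ℝ) ≤ d := by exact_mod_cast hd
  set κ : ℝ := 2 * d / c
  have hκ : 0 < κ := div_pos (by linarith) hc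
  refine ⟨c / 2 * κ ^ (m / (m + 2)), by positivity, ?_⟩
  have hρ : Tendsto (fun ℓ : ℕ => (κ * (ℓ : ℝ) ^ 2) ^ (m + 2)⁻¹) atTop atTop :=
    (tendsto_rpow_atTop (inv_pos.2 (by linarith))).comp
      (((tendsto_pow_atTop two_ne_zero).comp tendsto_natCast_atTop_atTop).const_mul_atTop hκ)
  filter_upwards [hρ.eventually_ge_atTop (max R 1)] with ℓ hℓ
  set ρ := (κ * (ℓ : ℝ) ^ 2) ^ (m + 2)⁻¹
  have hρ0 : 0 < ρ := one_pos.trans_le ((le_max_right _ _).trans hℓ)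
  refine ⟨ρ, hρ0, ?_⟩
  have hρpow : ρ ^ m * ρ ^ 2 = κ * (ℓ : ℝ) ^ 2 := by
    rw [rpow_mul_sq hρ0, rpow_inv_rpow (by positivity) (by linarith)]
  have hcent : (ℓ : ℝ) * ((ℓ : ℝ) + d - 2) / ρ ^ 2 ≤ c / 2 * ρ ^ m := by
    rw [div_le_iff₀ (by positivity), mul_assoc, hρpow]
    calc _ ≤ d * (ℓ : ℝ) ^ 2 := mul_add_sub_two_le hd ℓ
      _ = c / 2 * (κ * ℓ ^ 2) := by simp only [κ]; field_simp
  have hρm : ρ ^ m = κ ^ (m / (m + 2)) * (ℓ : ℝ) ^ (2 * m / (m + 2)) :=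
    rpow_inv_add_two_rpow_mul_sq ℓ.cast_nonneg hκ.le m
  have hvρ := hdecay ρ ((le_max_left _ _).trans hℓ)
  rw [hρm] at hcent hvρ
  rw [effectivePotential]
  linarith

end EffectivePotential

theorem stmt13_general (d : ℕ) (hd : 2 ≤ d) (v : ℝ → ℝ) (hv : ContinuousOn v (Set.Ioi 0))
    (C s : ℝ) (hs : s ∈ Set.Ioo (0 : ℝ) 2)
    (hlow : ∀ r ∈ Set.Ioc (0 : ℝ) 1, v r ≥ -C * r ^ (-s))
    (c m R : ℝ) (hc : 0 < c) (hm : m ∈ Set.Ioo (-2 : ℝ) 0)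
    (hdecay : ∀ r ≥ R, -(1 / c) * r ^ m ≤ v r ∧ v r ≤ -c * r ^ m) :
    ∃ K ≥ (1 : ℝ), ∃ δ > (0 : ℝ), ∀ lam ∈ Set.Ioo (-δ) (0 : ℝ),
      (1 / K) * (-lam) ^ ((m + 2) / (2 * m)) ≤
        ((sSup {ℓ : ℕ | 1 ≤ ℓ ∧
          sInf ((fun r : ℝ => v r + (ℓ : ℝ) * ((ℓ : ℝ) + (d : ℝ) - 2) / r ^ 2) ''
            Set.Ioi 0) < lam} : ℕ) : ℝ) ∧
      ((sSup {ℓ : ℕ | 1 ≤ ℓ ∧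
          sInf ((fun r : ℝ => v r + (ℓ : ℝ) * ((ℓ : ℝ) + (d : ℝ) - 2) / r ^ 2) ''
            Set.Ioi 0) < lam} : ℕ) : ℝ) ≤ K * (-lam) ^ ((m + 2) / (2 * m)) := by
  obtain ⟨A, hA, hvA⟩ := exists_neg_div_sq_sub_mul_rpow_le hv hs.2.le hc hlow
    fun r hr => (hdecay r hr).1
  obtain ⟨c₂, hc₂, hVlow⟩ :=
    exists_eventually_neg_rpow_le_effectivePotential hd hm.1 hm.2.le hA hvA
  obtain ⟨c₃, hc₃, hVup⟩ := exists_eventually_effectivePotential_le_neg_rpow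
    (one_le_two.trans hd) hm.1 hc fun r hr => (hdecay r hr).2
  have hβ : 2 * m / (m + 2) < 0 := div_neg_of_neg_of_pos (by linarith [hm.2]) (by linarith [hm.1])
  rw [← inv_div]
  exact exists_bounds_sSup_of_eventually_rpow_bounds
    (E := fun ℓ => sInf (effectivePotential v d ℓ '' Ioi 0)) hβ hc₂ hc₃
    (hVlow.mono fun ℓ h => le_csInf (nonempty_Ioi.image _) (forall_mem_image.2 h))
    ((hVlow.and hVup).mono fun ℓ ⟨hlow, r, hr, hle⟩ =>
      (csInf_le ⟨_, forall_mem_image.2 hlow⟩ (mem_image_of_mem _ hr)).trans hle)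

/-- Corollary 3.8 (Case B): the maximal degree `p_λ` of spherical harmonics occurring in
an eigenfunction with eigenvalue `λ < 0` satisfies `p_λ ≍ (-λ)^{(m+2)/(2m)}` as `λ → 0⁻`. -/
theorem stmt13 (d : ℕ) (hd : 2 ≤ d) (v : ℝ → ℝ) (hv : ContinuousOn v (Set.Ioi 0))
    (C s : ℝ) (hC : 0 < C) (hs : s ∈ Set.Ioo (0 : ℝ) 2)
    (hlow : ∀ r ∈ Set.Ioc (0 : ℝ) 1, v r ≥ -C * r ^ (-s))
    (c m R : ℝ) (hc : 0 < c) (hm : m ∈ Set.Ioo (-2 : ℝ) 0) (hR : 0 < R)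
    (hdecay : ∀ r ≥ R, -(1 / c) * r ^ m ≤ v r ∧ v r ≤ -c * r ^ m) :
    ∃ K ≥ (1 : ℝ), ∃ δ > (0 : ℝ), ∀ lam ∈ Set.Ioo (-δ) (0 : ℝ),
      (1 / K) * (-lam) ^ ((m + 2) / (2 * m)) ≤
        ((sSup {ℓ : ℕ | 1 ≤ ℓ ∧
          sInf ((fun r : ℝ => v r + (ℓ : ℝ) * ((ℓ : ℝ) + (d : ℝ) - 2) / r ^ 2) ''
            Set.Ioi 0) < lam} : ℕ) : ℝ) ∧
      ((sSup {ℓ : ℕ | 1 ≤ ℓ ∧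
          sInf ((fun r : ℝ => v r + (ℓ : ℝ) * ((ℓ : ℝ) + (d : ℝ) - 2) / r ^ 2) ''
            Set.Ioi 0) < lam} : ℕ) : ℝ) ≤ K * (-lam) ^ ((m + 2) / (2 * m)) :=
  stmt13_general d hd v hv C s hs hlow c m R hc hm hdecay
end
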